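/- arXiv:cs/0505086 — 2 statements merged into one kernel-verified Lean document; each statement's English description precedes it below -/
import Mathlib

section
/- Let T₁ and T₂ be 𝒜-trees with 𝒜(T₁) = 𝒜(T₂) whose cluster representations satisfy: for every A ∈ 𝒜(T₁), the smallest member of 𝒞_𝒜(T₁) containing A equals the smallest member of 𝒞_𝒜(T₂) containing A; and for every X ∈ 𝒞_𝒜(T₁) and Y ∈ 𝒞_𝒜(T₂), if X ∩ Y ≠ ∅ then X ⊆ Y or Y ⊆ X. Then in the join T_{1,2}: the cluster of every node w_{Y,j} equals Y (i.e., 𝒜_{T_{1,2}}(w_{Y,j}) = Y for all Y ∈ 𝒞 and 1 ≤ j ≤ n_Y), and for every Y ∈ 𝒞 the node w_{Y,1} is the most recent common ancestor in T_{1,2} of the nodes with labels in Y. -/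
/-!
Common framework: rooted labeled trees ("𝒜-trees") following Llabrés–Rocha–Rosselló–Valiente.

A `PreTree α V` is the raw data of a directed graph on (a finite subset of) `V` together with
a partial labeling of its nodes by labels in `α`.  The predicate `PreTree.IsATree` asserts that
this data is a finite rooted tree (the root reaches every node by a unique directed path),
that the labeling is injective, and that every leaf is labeled.
-/

structure PreTree (α : Type) (V : Type) where
  nodes : Set V
  arc : V → V → Prop
  label : V → Option α

namespace PreTree

variable {α V W : Type}

/-- There is a directed path from `u` to `v` (possibly trivial). -/
def path (T : PreTree α V) (u v : V) : Prop := Relation.ReflTransGen T.arc u v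

/-- There is a non-trivial directed path (length ≥ 1) from `u` to `v`. -/
def pathNT (T : PreTree α V) (u v : V) : Prop := Relation.TransGen T.arc u v

/-- `𝒜(T)`: the set of labels of all nodes of `T`. -/
def labelSet (T : PreTree α V) : Set α := {a | ∃ v, T.label v = some a}

/-- `𝒜_T(v)`: the cluster of `v`, i.e. the set of labels of all descendants of `v`
(including `v` itself). -/
def cluster (T : PreTree α V) (v : V) : Set α := {a | ∃ w, T.path v w ∧ T.label w = some a}

/-- `𝒞_𝒜(T)`: the cluster representation of `T`. -/
def clusterRep (T : PreTree α V) : Set (Set α) := {C | ∃ v ∈ T.nodes, T.cluster v = C}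

/-- A leaf is a node without children. -/
def IsLeaf (T : PreTree α V) (v : V) : Prop := v ∈ T.nodes ∧ ∀ w, ¬ T.arc v w

/-- `ℒ(T)`: the set of labels of the leaves of `T`. -/
def leafLabels (T : PreTree α V) : Set α := {a | ∃ v, T.IsLeaf v ∧ T.label v = some a}

/-- A node is elementary when it has exactly one child. -/
def IsElementary (T : PreTree α V) (v : V) : Prop := ∃! w, T.arc v w

/-- `T` is an 𝒜-tree: a finite rooted tree (every node reachable from the root by a unique
directed path, which is captured by unique parents, acyclicity and reachability from a root)
with an injective partial labeling such that every leaf is labeled. -/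
structure IsATree (T : PreTree α V) : Prop where
  finite_nodes : T.nodes.Finite
  arc_mem_left : ∀ {u v : V}, T.arc u v → u ∈ T.nodes
  arc_mem_right : ∀ {u v : V}, T.arc u v → v ∈ T.nodes
  parent_unique : ∀ {u v w : V}, T.arc u w → T.arc v w → u = v
  acyclic : ∀ {u v : V}, T.arc u v → ¬ T.path v u
  rooted : T.nodes.Nonempty → ∃ r ∈ T.nodes, ∀ v ∈ T.nodes, T.path r v
  label_mem : ∀ {v : V} {a : α}, T.label v = some a → v ∈ T.nodes
  label_inj : ∀ {u v : V} {a : α}, T.label u = some a → T.label v = some a → u = v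
  leaf_labeled : ∀ v ∈ T.nodes, (∀ w, ¬ T.arc v w) → ∃ a, T.label v = some a

/-- A semi-labeled tree over `𝒜` is an 𝒜-tree all of whose elementary nodes are labeled. -/
def IsSemiLabeled (T : PreTree α V) : Prop :=
  T.IsATree ∧ ∀ v ∈ T.nodes, T.IsElementary v → ∃ a, T.label v = some a

open Classical in
/-- The restriction `T|X`: the subtree of `T` induced on the nodes whose cluster meets `X`,
keeping exactly the labels that belong to `X`. -/
noncomputable def restrict (T : PreTree α V) (X : Set α) : PreTree α V where
  nodes := {v | v ∈ T.nodes ∧ (T.cluster v ∩ X).Nonempty}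
  arc u v := T.arc u v ∧ (T.cluster u ∩ X).Nonempty ∧ (T.cluster v ∩ X).Nonempty
  label v := if (∃ a ∈ X, T.label v = some a) then T.label v else none

/-- A weak topological embedding `f : S → T`: an injective map on nodes which preserves labels
and preserves and reflects directed paths. -/
def IsWTE (S : PreTree α V) (T : PreTree α W) (f : V → W) : Prop :=
  (∀ v ∈ S.nodes, f v ∈ T.nodes) ∧
  (∀ u ∈ S.nodes, ∀ v ∈ S.nodes, f u = f v → u = v) ∧
  (∀ (v : V) (a : α), S.label v = some a → T.label (f v) = some a) ∧
  (∀ u ∈ S.nodes, ∀ v ∈ S.nodes, (S.path u v ↔ T.path (f u) (f v)))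

/-- Two 𝒜-trees are ancestrally compatible when they admit weak topological embeddings into
a same 𝒜-tree. -/
def AncCompat (T₁ : PreTree α V) (T₂ : PreTree α W) : Prop :=
  ∃ (U : Type) (T : PreTree α U), T.IsATree ∧ (∃ f, IsWTE T₁ T f) ∧ (∃ g, IsWTE T₂ T g)

/-- `m` is the most recent common ancestor of `x` and `y` in `T`. -/
def IsMRCA (T : PreTree α V) (x y m : V) : Prop :=
  T.path m x ∧ T.path m y ∧ ∀ n, T.path n x → T.path n y → T.path n m

/-- Local compatibility: condition (C1) on pairs of common labels and condition (C2)
on triples of common labels. -/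
def LocallyCompatible (T₁ : PreTree α V) (T₂ : PreTree α W) : Prop :=
  (∀ (a b : α) (x₁ y₁ : V) (x₂ y₂ : W),
      T₁.label x₁ = some a → T₁.label y₁ = some b →
      T₂.label x₂ = some a → T₂.label y₂ = some b →
      (T₁.path x₁ y₁ ↔ T₂.path x₂ y₂)) ∧
  (∀ (a b c : α) (va₁ vb₁ vc₁ m₁ m₁' : V) (va₂ vb₂ vc₂ m₂ m₂' : W),
      T₁.label va₁ = some a → T₁.label vb₁ = some b → T₁.label vc₁ = some c →
      T₂.label va₂ = some a → T₂.label vb₂ = some b → T₂.label vc₂ = some c →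
      IsMRCA T₁ vb₁ vc₁ m₁ → IsMRCA T₁ va₁ vb₁ m₁' →
      IsMRCA T₂ va₂ vb₂ m₂ → IsMRCA T₂ vb₂ vc₂ m₂' →
      T₁.pathNT m₁ m₁' → ¬ T₂.pathNT m₂ m₂')

/-- `T` ancestrally displays `S`. -/
def Displays (T : PreTree α W) (S : PreTree α V) : Prop :=
  S.labelSet ⊆ T.labelSet ∧
  (∀ (a b : α) (x y : V) (x' y' : W),
      S.label x = some a → S.label y = some b →
      T.label x' = some a → T.label y' = some b →
      (S.path x y ↔ T.path x' y')) ∧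
  S.clusterRep ⊆ (T.restrict S.labelSet).clusterRep

/-- An unlabeled elementary node. -/
def ElemUnlab (T : PreTree α V) (v : V) : Prop := T.label v = none ∧ T.IsElementary v

/-- The semi-labeled tree obtained from `S` by removing its unlabeled elementary nodes and
replacing by single arcs the maximal paths all of whose intermediate nodes are unlabeled
and elementary. -/
def contract (S : PreTree α V) : PreTree α V where
  nodes := {v | v ∈ S.nodes ∧ ¬ ElemUnlab S v}
  arc u v := (u ∈ S.nodes ∧ ¬ ElemUnlab S u) ∧ (v ∈ S.nodes ∧ ¬ ElemUnlab S v) ∧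
    ∃ l : List V, List.Chain' S.arc (u :: (l ++ [v])) ∧ ∀ m ∈ l, ElemUnlab S m
  label := S.label

/-- `X` is the smallest member of the family `R` containing the label `a`. -/
def SmallestContaining (R : Set (Set α)) (a : α) (X : Set α) : Prop :=
  X ∈ R ∧ a ∈ X ∧ ∀ Y ∈ R, a ∈ Y → X ⊆ Y

/-- `m_{ℓ,Y}`: the number of nodes of `T` whose cluster is `Y`. -/
noncomputable def mcount (T : PreTree α V) (Y : Set α) : ℕ :=
  {v | v ∈ T.nodes ∧ T.cluster v = Y}.ncard

/-- `𝒞 = 𝒞_𝒜(T₁) ∪ 𝒞_𝒜(T₂)`. -/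
def joinC (T₁ : PreTree α V) (T₂ : PreTree α W) : Set (Set α) :=
  T₁.clusterRep ∪ T₂.clusterRep

/-- `n_Y = max (m_{1,Y}, m_{2,Y})`. -/
noncomputable def joinN (T₁ : PreTree α V) (T₂ : PreTree α W) (Y : Set α) : ℕ :=
  max (mcount T₁ Y) (mcount T₂ Y)

open Classical in
/-- The join `T_{1,2}` of two 𝒜-trees with the same label set: nodes are the pairs
`w_{Y,j} = (Y, j)` with `Y ∈ 𝒞` and `1 ≤ j ≤ n_Y`, with the chain arcs `(w_{Y,j}, w_{Y,j-1})`
and the arcs `(w_{Y,1}, w_{Z,n_Z})` for `Z ⊊ Y` maximal in `𝒞`, and `w_{Y,1}` labeled `A`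
exactly when `Y = (⋃ {Z ∈ 𝒞 ∣ Z ⊊ Y}) ⊔ {A}`. -/
noncomputable def join (T₁ : PreTree α V) (T₂ : PreTree α W) : PreTree α (Set α × ℕ) where
  nodes := {p | p.1 ∈ joinC T₁ T₂ ∧ 1 ≤ p.2 ∧ p.2 ≤ joinN T₁ T₂ p.1}
  arc p q := p.1 ∈ joinC T₁ T₂ ∧ q.1 ∈ joinC T₁ T₂ ∧
    ((q.1 = p.1 ∧ p.2 = q.2 + 1 ∧ 1 ≤ q.2 ∧ p.2 ≤ joinN T₁ T₂ p.1) ∨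
     (p.2 = 1 ∧ q.1 ⊂ p.1 ∧ q.2 = joinN T₁ T₂ q.1 ∧ 1 ≤ q.2 ∧
       ¬ ∃ Z ∈ joinC T₁ T₂, q.1 ⊂ Z ∧ Z ⊂ p.1))
  label p :=
    if h : p.2 = 1 ∧ p.1 ∈ joinC T₁ T₂ ∧
        ∃ a : α, a ∉ ⋃₀ {Z ∈ joinC T₁ T₂ | Z ⊂ p.1} ∧
          p.1 = (⋃₀ {Z ∈ joinC T₁ T₂ | Z ⊂ p.1}) ∪ {a}
    then some h.2.2.choose else none

/-- The canonical map `f_ℓ : V(T_ℓ) → V(T_{1,2})`, sending the `i`-th node (from the bottom)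
of the chain of nodes of `T` with cluster `Y` to `w_{Y,i}`. -/
noncomputable def joinMap (T : PreTree α V) (v : V) : Set α × ℕ :=
  (T.cluster v, {u | u ∈ T.nodes ∧ T.cluster u = T.cluster v ∧ T.pathNT v u}.ncard + 1)

end PreTree

/-!
In an 𝒜-tree the smallest cluster containing a label `a` is the cluster of the node labeled `a`,
so it is the union of the strictly smaller clusters and `{a}`. As both trees have the same
smallest cluster `X` containing `a`, it is also the smallest member of `𝒞` containing `a`, so the
decomposition holds inside `𝒞` with `a` fresh, and the join labels `w_{X,1}` by `a`. Arcs of the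
join only shrink the cluster index, while from `w_{Y,1}` one reaches `w_{X,1}` for every `X ⊆ Y`
in `𝒞`, descending through maximal proper members and their chains. Hence `w_{Y,j}` has cluster
`Y`, and a node above all labels of `Y` has index `⊇ Y`, so it is `w_{Y,1}` itself or lies above
it.
-/

namespace PreTree

variable {α V W : Type}

section Tree

variable {T : PreTree α V}

theorem IsATree.path_antisymm (h : T.IsATree) {u v : V} (huv : T.path u v) (hvu : T.path v u) :
    u = v := by
  rcases Relation.ReflTransGen.cases_head huv with rfl | ⟨x, hux, hxv⟩
  · rfl
  · exact absurd (hxv.trans hvu) (h.acyclic hux)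

theorem IsATree.mem_cluster_iff (h : T.IsATree) {w : V} {a : α} (hw : T.label w = some a)
    {v : V} : a ∈ T.cluster v ↔ T.path v w :=
  ⟨fun ⟨_, hvu, hu⟩ => h.label_inj hu hw ▸ hvu, fun hvw => ⟨w, hvw, hw⟩⟩

theorem cluster_subset_cluster {u v : V} (huv : T.path u v) : T.cluster v ⊆ T.cluster u :=
  fun _ ⟨w, hvw, hw⟩ => ⟨w, huv.trans hvw, hw⟩

theorem cluster_subset_labelSet (v : V) : T.cluster v ⊆ T.labelSet :=
  fun _ ⟨w, _, hw⟩ => ⟨w, hw⟩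

/-- A descendant of `v` with the fewest descendants is a leaf, hence labeled. -/
theorem IsATree.cluster_nonempty (h : T.IsATree) {v : V} (hv : v ∈ T.nodes) :
    (T.cluster v).Nonempty := by
  let below : Set V := {w | w ∈ T.nodes ∧ T.path v w}
  obtain ⟨w, ⟨hw, hvw⟩, hmin⟩ := (h.finite_nodes.subset fun _ hw => hw.1).exists_minimalFor
    (fun w => {u | T.path w u}) below ⟨v, hv, .refl⟩
  have hleaf : ∀ x, ¬ T.arc w x := fun x hwx =>
    h.acyclic hwx <| hmin ⟨h.arc_mem_right hwx, hvw.tail hwx⟩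
      (fun _ hxu => Relation.ReflTransGen.head hwx hxu) .refl
  obtain ⟨a, ha⟩ := h.leaf_labeled w hw hleaf
  exact ⟨a, w, hvw, ha⟩

theorem IsATree.clusterRep_finite (h : T.IsATree) : T.clusterRep.Finite := by
  refine (h.finite_nodes.image T.cluster).subset ?_
  rintro _ ⟨v, hv, rfl⟩
  exact ⟨v, hv, rfl⟩

theorem IsATree.one_le_mcount (h : T.IsATree) {Y : Set α} (hY : Y ∈ T.clusterRep) :
    1 ≤ T.mcount Y := by
  obtain ⟨v, hv, rfl⟩ := hY
  exact (Set.ncard_pos (h.finite_nodes.subset fun _ hu => hu.1)).2 ⟨v, hv, rfl⟩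

theorem IsATree.eq_cluster_of_smallestContaining (h : T.IsATree) {w : V} {a : α}
    (hw : T.label w = some a) {X : Set α} (hX : SmallestContaining T.clusterRep a X) :
    X = T.cluster w := by
  obtain ⟨⟨v, -, rfl⟩, hav, hmin⟩ := hX
  exact (hmin _ ⟨w, h.label_mem hw, rfl⟩ ⟨w, .refl, hw⟩).antisymm
    (cluster_subset_cluster ((h.mem_cluster_iff hw).1 hav))

/-- Every label `b ≠ a` below `w` lies in the cluster of the node labeled `b`, which misses `a`. -/
theorem IsATree.cluster_eq_sUnion_ssubset_union_singleton (h : T.IsATree) {w : V} {a : α}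
    (hw : T.label w = some a) {R : Set (Set α)} (hR : T.clusterRep ⊆ R) :
    T.cluster w = ⋃₀ {Z ∈ R | Z ⊂ T.cluster w} ∪ {a} := by
  refine subset_antisymm (fun b hb => ?_) ?_
  · rcases eq_or_ne b a with rfl | hba
    · exact Or.inr rfl
    obtain ⟨u, hwu, hu⟩ := hb
    have hsub : T.cluster u ⊆ T.cluster w := cluster_subset_cluster hwu
    have ha : a ∉ T.cluster u := fun ha => by
      obtain rfl := h.path_antisymm hwu ((h.mem_cluster_iff hw).1 ha)
      exact hba (Option.some.inj (hu.symm.trans hw))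
    exact Or.inl ⟨T.cluster u, ⟨hR ⟨u, h.label_mem hu, rfl⟩,
      hsub.ssubset_of_not_subset fun hws => ha (hws ⟨w, .refl, hw⟩)⟩, u, .refl, hu⟩
  · rintro b (⟨Z, ⟨-, hZ⟩, hbZ⟩ | rfl)
    · exact hZ.subset hbZ
    · exact ⟨w, .refl, hw⟩

end Tree

theorem SmallestContaining.union {R₁ R₂ : Set (Set α)} {a : α} {X : Set α}
    (h₁ : SmallestContaining R₁ a X) (h₂ : SmallestContaining R₂ a X) :
    SmallestContaining (R₁ ∪ R₂) a X :=
  ⟨Or.inl h₁.1, h₁.2.1, fun Y hY haY => hY.elim (h₁.2.2 Y · haY) (h₂.2.2 Y · haY)⟩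

section Join

variable {T₁ : PreTree α V} {T₂ : PreTree α W}

theorem label_join_eq_some {p : Set α × ℕ} {a : α} (hp : (join T₁ T₂).label p = some a) :
    p.2 = 1 ∧ p.1 ∈ joinC T₁ T₂ ∧ a ∈ p.1 ∧ ∀ Z ∈ joinC T₁ T₂, Z ⊂ p.1 → a ∉ Z := by
  simp only [join] at hp
  split_ifs at hp with hcond
  obtain rfl := Option.some.inj hp
  obtain ⟨hfresh, hdecomp⟩ := hcond.2.2.choose_spec
  exact ⟨hcond.1, hcond.2.1, hdecomp.superset (Or.inr rfl),
    fun Z hZ hZp haZ => hfresh ⟨Z, ⟨hZ, hZp⟩, haZ⟩⟩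

theorem label_join_of_eq_union {Y : Set α} {a : α} (hY : Y ∈ joinC T₁ T₂)
    (hfresh : a ∉ ⋃₀ {Z ∈ joinC T₁ T₂ | Z ⊂ Y})
    (hdecomp : Y = ⋃₀ {Z ∈ joinC T₁ T₂ | Z ⊂ Y} ∪ {a}) :
    (join T₁ T₂).label (Y, 1) = some a := by
  have hcond : (Y, 1).2 = 1 ∧ Y ∈ joinC T₁ T₂ ∧ ∃ b, b ∉ ⋃₀ {Z ∈ joinC T₁ T₂ | Z ⊂ Y} ∧
      Y = ⋃₀ {Z ∈ joinC T₁ T₂ | Z ⊂ Y} ∪ {b} := ⟨rfl, hY, a, hfresh, hdecomp⟩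
  simp only [join, dif_pos hcond, Option.some.injEq]
  exact ((hcond.2.2.choose_spec.2.subset (hdecomp.superset (Or.inr rfl))).resolve_left
    hfresh).symm

theorem eq_of_label_join_eq_some {X : Set α} {a : α}
    (hX : SmallestContaining (joinC T₁ T₂) a X) {p : Set α × ℕ}
    (hp : (join T₁ T₂).label p = some a) : p = (X, 1) := by
  obtain ⟨hp1, hpC, hap, hfresh⟩ := label_join_eq_some hp
  have hXp : X ⊆ p.1 := hX.2.2 _ hpC hap
  have hpX : p.1 = X := by_contra fun hne =>
    hfresh X hX.1 (hXp.ssubset_of_ne fun h => hne h.symm) hX.2.1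
  exact Prod.ext hpX hp1

theorem fst_subset_of_join_path {p q : Set α × ℕ} (hpq : (join T₁ T₂).path p q) :
    q.1 ⊆ p.1 := by
  induction hpq with
  | refl => exact subset_rfl
  | tail _ hqr ih =>
    obtain ⟨-, -, ⟨he, -⟩ | ⟨-, hss, -⟩⟩ := hqr
    · exact he ▸ ih
    · exact hss.subset.trans ih

theorem join_path_of_le {Y : Set α} (hY : Y ∈ joinC T₁ T₂) {j k : ℕ} (hk : 1 ≤ k) (hkj : k ≤ j)
    (hj : j ≤ joinN T₁ T₂ Y) : (join T₁ T₂).path (Y, j) (Y, k) := by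
  induction j, hkj using Nat.le_induction with
  | base => exact .refl
  | succ j hkj ih =>
    have harc : (join T₁ T₂).arc (Y, j + 1) (Y, j) :=
      ⟨hY, hY, Or.inl ⟨rfl, rfl, hk.trans hkj, hj⟩⟩
    exact .head harc (ih (by omega))

theorem joinC_finite (h₁ : T₁.IsATree) (h₂ : T₂.IsATree) : (joinC T₁ T₂).Finite :=
  h₁.clusterRep_finite.union h₂.clusterRep_finite

theorem one_le_joinN (h₁ : T₁.IsATree) (h₂ : T₂.IsATree) {Y : Set α} (hY : Y ∈ joinC T₁ T₂) :
    1 ≤ joinN T₁ T₂ Y :=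
  hY.elim (fun hY => (h₁.one_le_mcount hY).trans (le_max_left _ _))
    (fun hY => (h₂.one_le_mcount hY).trans (le_max_right _ _))

theorem nonempty_of_mem_joinC (h₁ : T₁.IsATree) (h₂ : T₂.IsATree) {Y : Set α}
    (hY : Y ∈ joinC T₁ T₂) : Y.Nonempty := by
  rcases hY with ⟨v, hv, rfl⟩ | ⟨v, hv, rfl⟩
  exacts [h₁.cluster_nonempty hv, h₂.cluster_nonempty hv]

theorem join_path_fst_one_of_arc {m q : Set α × ℕ}
    (hmq : (join T₁ T₂).arc m q) : (join T₁ T₂).path m (m.1, 1) := by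
  obtain ⟨hm, -, ⟨-, hm2, hq, hN⟩ | ⟨hm2, -⟩⟩ := hmq
  · exact join_path_of_le hm le_rfl (by omega) hN
  · exact hm2 ▸ .refl

/-- Descend from `Y` through a maximal member of `joinC` strictly between `X` and `Y`. -/
theorem join_path_of_subset (h₁ : T₁.IsATree) (h₂ : T₂.IsATree) {X Y : Set α}
    (hX : X ∈ joinC T₁ T₂) (hY : Y ∈ joinC T₁ T₂) (hXY : X ⊆ Y) :
    (join T₁ T₂).path (Y, 1) (X, 1) := by
  revert hXY
  refine ((joinC_finite h₁ h₂).wellFoundedOn (r := (· ⊂ ·))).induction hY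
    (P := fun Y => X ⊆ Y → (join T₁ T₂).path (Y, 1) (X, 1)) fun Y hY ih hXY => ?_
  rcases hXY.eq_or_ssubset with rfl | hXY
  · exact .refl
  obtain ⟨Z, ⟨hZ, hXZ, hZY⟩, hZmax⟩ :=
    ((joinC_finite h₁ h₂).subset fun _ hZ => hZ.1).exists_maximal
      (⟨X, hX, subset_rfl, hXY⟩ : {Z ∈ joinC T₁ T₂ | X ⊆ Z ∧ Z ⊂ Y}.Nonempty)
  have harc : (join T₁ T₂).arc (Y, 1) (Z, joinN T₁ T₂ Z) :=
    ⟨hY, hZ, Or.inr ⟨rfl, hZY, rfl, one_le_joinN h₁ h₂ hZ, fun ⟨Z', hZ', hZZ', hZ'Y⟩ =>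
      hZZ'.not_subset (hZmax ⟨hZ', hXZ.trans hZZ'.subset, hZ'Y⟩ hZZ'.subset)⟩⟩
  exact .head harc
    ((join_path_of_le hZ le_rfl (one_le_joinN h₁ h₂ hZ) le_rfl).trans (ih Z hZ hZY hXZ))

end Join

section Compatible

variable {T₁ : PreTree α V} {T₂ : PreTree α W}

def LabelsAtSmallest (T₁ : PreTree α V) (T₂ : PreTree α W) : Prop :=
  ∀ ⦃Y⦄, Y ∈ joinC T₁ T₂ → ∀ ⦃a⦄, a ∈ Y →
    ∃ X, SmallestContaining (joinC T₁ T₂) a X ∧ (join T₁ T₂).label (X, 1) = some a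

theorem label_join_of_smallestContaining (h₁ : T₁.IsATree) {w : V} {a : α}
    (hw : T₁.label w = some a) {X : Set α} (hX₁ : SmallestContaining T₁.clusterRep a X)
    (hX : SmallestContaining (joinC T₁ T₂) a X) : (join T₁ T₂).label (X, 1) = some a := by
  obtain rfl := h₁.eq_cluster_of_smallestContaining hw hX₁
  exact label_join_of_eq_union hX.1
    (fun ⟨Z, ⟨hZ, hZX⟩, haZ⟩ => hZX.not_subset (hX.2.2 Z hZ haZ))
    (h₁.cluster_eq_sUnion_ssubset_union_singleton hw Set.subset_union_left)

theorem labelsAtSmallest_of_smallestContaining (h₁ : T₁.IsATree)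
    (hl : T₁.labelSet = T₂.labelSet)
    (hsm : ∀ a ∈ T₁.labelSet, ∃ X : Set α,
      SmallestContaining T₁.clusterRep a X ∧ SmallestContaining T₂.clusterRep a X) :
    LabelsAtSmallest T₁ T₂ := by
  intro Y hY a ha
  have haL : a ∈ T₁.labelSet := by
    rcases hY with ⟨v, -, rfl⟩ | ⟨v, -, rfl⟩
    · exact cluster_subset_labelSet v ha
    · exact hl ▸ cluster_subset_labelSet v ha
  obtain ⟨X, hX₁, hX₂⟩ := hsm a haL
  obtain ⟨w, hw⟩ := haL
  exact ⟨X, hX₁.union hX₂, label_join_of_smallestContaining h₁ hw hX₁ (hX₁.union hX₂)⟩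

theorem join_path_of_label (h₁ : T₁.IsATree) (h₂ : T₂.IsATree)
    (hsmall : LabelsAtSmallest T₁ T₂)
    {Y : Set α} (hY : Y ∈ joinC T₁ T₂) {a : α} (ha : a ∈ Y) {p : Set α × ℕ}
    (hp : (join T₁ T₂).label p = some a) : (join T₁ T₂).path (Y, 1) p := by
  obtain ⟨X, hX, -⟩ := hsmall hY ha
  rw [eq_of_label_join_eq_some hX hp]
  exact join_path_of_subset h₁ h₂ hX.1 hY (hX.2.2 Y hY ha)

theorem join_cluster_eq (h₁ : T₁.IsATree) (h₂ : T₂.IsATree)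
    (hsmall : LabelsAtSmallest T₁ T₂)
    {Y : Set α} (hY : Y ∈ joinC T₁ T₂) {j : ℕ} (hj : 1 ≤ j) (hjN : j ≤ joinN T₁ T₂ Y) :
    (join T₁ T₂).cluster (Y, j) = Y := by
  refine subset_antisymm ?_ fun a ha => ?_
  · rintro a ⟨p, hp, hpa⟩
    exact fst_subset_of_join_path hp (label_join_eq_some hpa).2.2.1
  · obtain ⟨X, -, hXa⟩ := hsmall hY ha
    exact ⟨(X, 1), (join_path_of_le hY le_rfl hj hjN).trans
      (join_path_of_label h₁ h₂ hsmall hY ha hXa), hXa⟩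

theorem join_path_of_forall_label (h₁ : T₁.IsATree) (h₂ : T₂.IsATree)
    (hsmall : LabelsAtSmallest T₁ T₂)
    {Y : Set α} (hY : Y ∈ joinC T₁ T₂) {m : Set α × ℕ}
    (hm : ∀ a ∈ Y, ∀ p, (join T₁ T₂).label p = some a → (join T₁ T₂).path m p) :
    (join T₁ T₂).path m (Y, 1) := by
  have hYm : Y ⊆ m.1 := fun a ha => by
    obtain ⟨X, hX, hXa⟩ := hsmall hY ha
    exact fst_subset_of_join_path (hm a ha _ hXa) hX.2.1
  obtain ⟨a, ha⟩ := nonempty_of_mem_joinC h₁ h₂ hY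
  obtain ⟨X, hX, hXa⟩ := hsmall hY ha
  rcases (hm a ha _ hXa).cases_head with rfl | ⟨q, hmq, -⟩
  · obtain rfl : X = Y := (hX.2.2 Y hY ha).antisymm hYm
    exact .refl
  · exact (join_path_fst_one_of_arc hmq).trans (join_path_of_subset h₁ h₂ hY hmq.1 hYm)

end Compatible

end PreTree

theorem stmt16_general {α V W : Type} (T₁ : PreTree α V) (T₂ : PreTree α W)
    (h₁ : T₁.IsATree) (h₂ : T₂.IsATree) (hl : T₁.labelSet = T₂.labelSet)
    (hsm : ∀ a ∈ T₁.labelSet, ∃ X : Set α,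
        PreTree.SmallestContaining T₁.clusterRep a X ∧
        PreTree.SmallestContaining T₂.clusterRep a X) :
    (∀ Y ∈ PreTree.joinC T₁ T₂, ∀ j : ℕ, 1 ≤ j → j ≤ PreTree.joinN T₁ T₂ Y →
        (PreTree.join T₁ T₂).cluster (Y, j) = Y) ∧
    (∀ Y ∈ PreTree.joinC T₁ T₂,
        (∀ a ∈ Y, ∀ p : Set α × ℕ, (PreTree.join T₁ T₂).label p = some a →
            (PreTree.join T₁ T₂).path (Y, 1) p) ∧
        (∀ m : Set α × ℕ,
            (∀ a ∈ Y, ∀ p : Set α × ℕ, (PreTree.join T₁ T₂).label p = some a →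
                (PreTree.join T₁ T₂).path m p) →
            (PreTree.join T₁ T₂).path m (Y, 1))) := by
  have hsmall := PreTree.labelsAtSmallest_of_smallestContaining h₁ hl hsm
  exact ⟨fun Y hY j hj hjN => PreTree.join_cluster_eq h₁ h₂ hsmall hY hj hjN,
    fun Y hY => ⟨fun a ha p hp => PreTree.join_path_of_label h₁ h₂ hsmall hY ha hp,
      fun m hm => PreTree.join_path_of_forall_label h₁ h₂ hsmall hY hm⟩⟩

/-- Under condition (iii), in the join `T_{1,2}` the cluster of every node
`w_{Y,j}` equals `Y`, and `w_{Y,1}` is the most recent common ancestor of the nodes with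
labels in `Y`. -/
theorem stmt16 {α V W : Type} (T₁ : PreTree α V) (T₂ : PreTree α W)
    (h₁ : T₁.IsATree) (h₂ : T₂.IsATree) (hl : T₁.labelSet = T₂.labelSet)
    (hsm : ∀ a ∈ T₁.labelSet, ∃ X : Set α,
        PreTree.SmallestContaining T₁.clusterRep a X ∧
        PreTree.SmallestContaining T₂.clusterRep a X)
    (hint : ∀ X ∈ T₁.clusterRep, ∀ Y ∈ T₂.clusterRep,
        (X ∩ Y).Nonempty → X ⊆ Y ∨ Y ⊆ X) :
    (∀ Y ∈ PreTree.joinC T₁ T₂, ∀ j : ℕ, 1 ≤ j → j ≤ PreTree.joinN T₁ T₂ Y →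
        (PreTree.join T₁ T₂).cluster (Y, j) = Y) ∧
    (∀ Y ∈ PreTree.joinC T₁ T₂,
        (∀ a ∈ Y, ∀ p : Set α × ℕ, (PreTree.join T₁ T₂).label p = some a →
            (PreTree.join T₁ T₂).path (Y, 1) p) ∧
        (∀ m : Set α × ℕ,
            (∀ a ∈ Y, ∀ p : Set α × ℕ, (PreTree.join T₁ T₂).label p = some a →
                (PreTree.join T₁ T₂).path m p) →
            (PreTree.join T₁ T₂).path m (Y, 1))) :=
  stmt16_general T₁ T₂ h₁ h₂ hl hsm
end

section
/- Let T₁ and T₂ be arbitrary 𝒜-trees and let T̄₁ = T₁|(𝒜(T₁) ∩ 𝒜(T₂)) and T̄₂ = T₂|(𝒜(T₁) ∩ 𝒜(T₂)). Then the following assertions are equivalent: (i) T₁ and T₂ are ancestrally compatible; (ii) T₁ and T₂ are locally compatible; (iii) for every A ∈ 𝒜(T₁) ∩ 𝒜(T₂), the smallest member of 𝒞_𝒜(T̄₁) containing A equals the smallest member of 𝒞_𝒜(T̄₂) containing A, and for every X ∈ 𝒞_𝒜(T̄₁) and Y ∈ 𝒞_𝒜(T̄₂), if X ∩ Y ≠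 ∅ then X ⊆ Y or Y ⊆ X. -/
/-!
(i) ⇒ (ii): in a common supertree the images of `v_{A,B}` (from `T₁`) and of `v_{B,C}` (from
`T₂`) are both ancestors of `v_B`, hence comparable. Whichever is higher pulls back to a common
ancestor of the other pair in its own tree, against the strict paths of (C2).

(ii) ⇒ (iii): by (C1), `v_A` has the same common-label descendants in both trees, so both
restrictions have the same smallest cluster containing `A`. If clusters `X` of `T̄₁` and `Y`
of `T̄₂` share `B` while `A ∈ X \ Y` and `C ∈ Y \ X`, then `v_{B,C}` lies strictly above
`v_{A,B}` in `T₁` and strictly below it in `T₂`, against (C2).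

(iii) ⇒ (i): without common labels, hang the root of `T₂` below that of `T₁`. Otherwise the
clusters of `T̄₁` and `T̄₂` form one hierarchy in which each common label has the same smallest
cluster on both sides. Glue along it: for each cluster `Y` stack the nodes of `T̄₂` with cluster
`Y` above those of `T̄₁` (a node of `T̄₂` carrying a common label is identified with its twin in
`T₁`, both being at the bottom), link each chain downwards and its bottom to the tops of the
chains of the maximal smaller clusters, and let the subtrees without common labels hang where
they hung. As in each `T̄ᵢ`, the ancestor relation between core nodes is then read off from
clusters and positions in chains, so both inclusions preserve and reflect paths.
-/

namespace PreTree

variable {α V W : Type}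

section Path

variable {T : PreTree α V} {u v w : V}

theorem path_refl (T : PreTree α V) (v : V) : T.path v v := Relation.ReflTransGen.refl

theorem path.trans (h : T.path u v) (h' : T.path v w) : T.path u w :=
  Relation.ReflTransGen.trans h h'

theorem path_of_arc (h : T.arc u v) : T.path u v := Relation.ReflTransGen.single h

theorem pathNT_of_path_of_ne (h : T.path u v) (hne : u ≠ v) : T.pathNT u v := by
  rcases h.cases_head with rfl | ⟨c, hc, hcv⟩
  · exact absurd rfl hne
  · exact Relation.TransGen.head' hc hcv

theorem cluster_subset_of_path (h : T.path u v) : T.cluster v ⊆ T.cluster u :=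
  fun _ ⟨w, hw, hl⟩ => ⟨w, h.trans hw, hl⟩

theorem exists_arc_of_path {P : V → Prop} (h : T.path u v) (hu : P u) (hv : ¬ P v) :
    ∃ p q, P p ∧ T.path u p ∧ T.arc p q ∧ ¬ P q ∧ T.path q v := by
  induction h using Relation.ReflTransGen.head_induction_on with
  | refl => exact absurd hu hv
  | @head u z huz hzv ih =>
    by_cases hz : P z
    · obtain ⟨p, q, hp, hzp, hpq, hq, hqv⟩ := ih hz
      exact ⟨p, q, hp, .head huz hzp, hpq, hq, hqv⟩
    · exact ⟨u, z, hu, path_refl T u, huz, hz, hzv⟩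

theorem IsMRCA.symm {x y m : V} (h : T.IsMRCA x y m) : T.IsMRCA y x m :=
  ⟨h.2.1, h.1, fun n hx hy => h.2.2 n hy hx⟩

end Path

namespace IsATree

variable {T : PreTree α V} {u v w : V}

theorem not_path_of_pathNT (hT : T.IsATree) (h : T.pathNT u v) : ¬ T.path v u := by
  obtain ⟨c, hc, hcv⟩ := Relation.TransGen.head'_iff.mp h
  exact fun h' => hT.acyclic hc (hcv.trans h')

theorem pathNT_irrefl (hT : T.IsATree) : ¬ T.pathNT u u :=
  fun h => hT.not_path_of_pathNT h (path_refl T u)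

theorem path_antisymm_s17 (hT : T.IsATree) (h : T.path u v) (h' : T.path v u) : u = v :=
  by_contra fun hne => hT.not_path_of_pathNT (pathNT_of_path_of_ne h hne) h'

theorem path_total_of_path (hT : T.IsATree) (hu : T.path u w) (hv : T.path v w) :
    T.path u v ∨ T.path v u := by
  induction hu using Relation.ReflTransGen.head_induction_on with
  | refl => exact Or.inr hv
  | head hux _ ih =>
    rcases ih with h | h
    · exact Or.inl (Relation.ReflTransGen.head hux h)
    · rcases h.cases_tail with rfl | ⟨y, hvy, hyx⟩
      · exact Or.inl (path_of_arc hux)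
      · exact Or.inr (hT.parent_unique hyx hux ▸ hvy)

theorem mem_nodes_of_path (hT : T.IsATree) (h : T.path u v) (hv : v ∈ T.nodes) :
    u ∈ T.nodes := by
  rcases h.cases_head with rfl | ⟨c, hc, _⟩
  · exact hv
  · exact hT.arc_mem_left hc

theorem mem_cluster_iff_s17 (hT : T.IsATree) {a : α} (hw : T.label w = some a) :
    a ∈ T.cluster v ↔ T.path v w :=
  ⟨fun ⟨_, hw', hl⟩ => hT.label_inj hl hw ▸ hw', fun h => ⟨w, h, hw⟩⟩

theorem path_total_of_mem_cluster (hT : T.IsATree) {a : α} (hu : a ∈ T.cluster u)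
    (hv : a ∈ T.cluster v) : T.path u v ∨ T.path v u := by
  obtain ⟨w, hw, hl⟩ := hu
  exact hT.path_total_of_path hw ((hT.mem_cluster_iff_s17 hl).mp hv)

theorem cluster_subset_or_subset (hT : T.IsATree)
    (hne : (T.cluster u ∩ T.cluster v).Nonempty) :
    T.cluster u ⊆ T.cluster v ∨ T.cluster v ⊆ T.cluster u := by
  obtain ⟨a, hu, hv⟩ := hne
  exact (hT.path_total_of_mem_cluster hv hu).imp cluster_subset_of_path cluster_subset_of_path

theorem labelSet_finite (hT : T.IsATree) : T.labelSet.Finite := by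
  refine ((hT.finite_nodes.image T.label).preimage
    (Option.some_injective α).injOn).subset ?_
  rintro a ⟨v, hv⟩
  exact ⟨v, hT.label_mem hv, hv⟩

theorem clusterRep_finite_s17 (hT : T.IsATree) : T.clusterRep.Finite :=
  (hT.finite_nodes.image T.cluster).subset fun _ ⟨v, hv, hY⟩ => ⟨v, hv, hY⟩

/-- The most recent common ancestor is the common ancestor with the most ancestors. -/
theorem exists_isMRCA (hT : T.IsATree) {x y n : V} (hx : x ∈ T.nodes) (hnx : T.path n x)
    (hny : T.path n y) : ∃ m, T.IsMRCA x y m := by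
  have hfin : {p | T.path p x ∧ T.path p y}.Finite :=
    hT.finite_nodes.subset fun p hp => hT.mem_nodes_of_path hp.1 hx
  obtain ⟨m, ⟨hmx, hmy⟩, hmax⟩ :=
    hfin.exists_maximalFor (fun p => {q | T.path q p}.ncard) _ ⟨n, hnx, hny⟩
  refine ⟨m, hmx, hmy, fun p hpx hpy => ?_⟩
  rcases hT.path_total_of_path hmx hpx with hmp | hpm
  · by_contra hnot
    have hlt : {q | T.path q m} ⊂ {q | T.path q p} :=
      ⟨fun q hq => hq.trans hmp, fun hsub => hnot (hsub (path_refl T p))⟩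
    have hlt := Set.ncard_lt_ncard hlt <|
      hT.finite_nodes.subset fun q hq => hT.mem_nodes_of_path hq (hT.mem_nodes_of_path hpx hx)
    exact hlt.not_ge (hmax ⟨hpx, hpy⟩ hlt.le)
  · exact hpm

end IsATree

section ChainIdx

variable {T : PreTree α V} {u v : V}

/-- The position of `v`, counted from `1` at the bottom, in the chain of nodes sharing its
cluster; it is the second coordinate of `joinMap`. -/
noncomputable def chainIdx (T : PreTree α V) (v : V) : ℕ :=
  {u | u ∈ T.nodes ∧ T.cluster u = T.cluster v ∧ T.pathNT v u}.ncard + 1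

theorem one_le_chainIdx (T : PreTree α V) (v : V) : 1 ≤ T.chainIdx v := Nat.le_add_left 1 _

theorem chainIdx_lt_of_pathNT (hT : T.IsATree) (hu : u ∈ T.nodes)
    (hc : T.cluster u = T.cluster v) (hp : T.pathNT v u) : T.chainIdx u < T.chainIdx v := by
  have hfin : ∀ x, {w | w ∈ T.nodes ∧ T.cluster w = T.cluster x ∧ T.pathNT x w}.Finite :=
    fun _ => hT.finite_nodes.subset fun _ hw => hw.1
  have hsub : insert u {w | w ∈ T.nodes ∧ T.cluster w = T.cluster u ∧ T.pathNT u w}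
      ⊆ {w | w ∈ T.nodes ∧ T.cluster w = T.cluster v ∧ T.pathNT v w} := by
    rintro w (rfl | ⟨hw, hwc, hwp⟩)
    · exact ⟨hu, hc, hp⟩
    · exact ⟨hw, hwc.trans hc, hp.trans hwp⟩
  have := Set.ncard_le_ncard hsub (hfin v)
  rw [Set.ncard_insert_of_notMem (fun h => hT.pathNT_irrefl h.2.2) (hfin u)] at this
  simp only [chainIdx]
  omega

theorem eq_of_chainIdx_eq (hT : T.IsATree) (hu : u ∈ T.nodes) (hv : v ∈ T.nodes)
    (hc : T.cluster u = T.cluster v) (hne : (T.cluster v).Nonempty)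
    (hi : T.chainIdx u = T.chainIdx v) : u = v := by
  obtain ⟨a, ha⟩ := hne
  by_contra huv
  rcases hT.path_total_of_mem_cluster (hc ▸ ha) ha with h | h
  · exact (chainIdx_lt_of_pathNT hT hv hc.symm (pathNT_of_path_of_ne h huv)).ne' hi
  · exact (chainIdx_lt_of_pathNT hT hu hc (pathNT_of_path_of_ne h (Ne.symm huv))).ne hi

theorem chainIdx_le_mcount (hT : T.IsATree) (hv : v ∈ T.nodes) :
    T.chainIdx v ≤ mcount T (T.cluster v) := by
  have hsub : insert v {w | w ∈ T.nodes ∧ T.cluster w = T.cluster v ∧ T.pathNT v w}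
      ⊆ {w | w ∈ T.nodes ∧ T.cluster w = T.cluster v} := by
    rintro w (rfl | ⟨hw, hwc, -⟩)
    exacts [⟨hv, rfl⟩, ⟨hw, hwc⟩]
  have := Set.ncard_le_ncard hsub (hT.finite_nodes.subset fun _ hw => hw.1)
  rwa [Set.ncard_insert_of_notMem (fun h => hT.pathNT_irrefl h.2.2)
    (hT.finite_nodes.subset fun _ hw => hw.1)] at this

theorem one_le_mcount_iff (hT : T.IsATree) {Y : Set α} :
    1 ≤ mcount T Y ↔ ∃ v, v ∈ T.nodes ∧ T.cluster v = Y :=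
  Set.ncard_pos (hT.finite_nodes.subset fun _ hw => hw.1)

theorem exists_chainIdx_eq (hT : T.IsATree) {Y : Set α} (hY : Y.Nonempty) {j : ℕ}
    (h1 : 1 ≤ j) (h2 : j ≤ mcount T Y) :
    ∃ v, v ∈ T.nodes ∧ T.cluster v = Y ∧ T.chainIdx v = j := by
  classical
  have hfin : {v | v ∈ T.nodes ∧ T.cluster v = Y}.Finite :=
    hT.finite_nodes.subset fun _ hw => hw.1
  set F := hfin.toFinset
  have himg : F.image T.chainIdx ⊆ Finset.Icc 1 (mcount T Y) := by
    simp only [Finset.subset_iff, Finset.mem_image, Set.Finite.mem_toFinset, F]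
    rintro _ ⟨v, ⟨hv, rfl⟩, rfl⟩
    exact Finset.mem_Icc.mpr ⟨one_le_chainIdx T v, chainIdx_le_mcount hT hv⟩
  have hinj : Set.InjOn T.chainIdx F := by
    intro u hu v hv
    simp only [Finset.mem_coe, Set.Finite.mem_toFinset, F] at hu hv
    exact eq_of_chainIdx_eq hT hu.1 hv.1 (hu.2.trans hv.2.symm) (hv.2 ▸ hY)
  have heq : F.image T.chainIdx = Finset.Icc 1 (mcount T Y) := by
    refine Finset.eq_of_subset_of_card_le himg ?_
    rw [Finset.card_image_of_injOn hinj, Nat.card_Icc, ← Set.ncard_eq_toFinset_card _ hfin]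
    simp [mcount]
  obtain ⟨v, hv, rfl⟩ := Finset.mem_image.mp (heq ▸ Finset.mem_Icc.mpr ⟨h1, h2⟩ :
    j ∈ F.image T.chainIdx)
  rw [Set.Finite.mem_toFinset] at hv
  exact ⟨v, hv.1, hv.2, rfl⟩

theorem chainIdx_eq_one_of_label (hT : T.IsATree) {a : α} (hl : T.label v = some a) :
    T.chainIdx v = 1 := by
  have : {u | u ∈ T.nodes ∧ T.cluster u = T.cluster v ∧ T.pathNT v u} = ∅ := by
    refine Set.eq_empty_of_forall_notMem fun u ⟨_, hc, hp⟩ => ?_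
    have hau : a ∈ T.cluster u := hc ▸ ⟨v, path_refl T v, hl⟩
    exact hT.not_path_of_pathNT hp ((hT.mem_cluster_iff_s17 hl).mp hau)
  simp [chainIdx, this]

theorem path_of_cluster_subset (hT : T.IsATree) (hu : u ∈ T.nodes)
    (hne : (T.cluster v).Nonempty) (hsub : T.cluster v ⊆ T.cluster u)
    (hidx : T.cluster v = T.cluster u → T.chainIdx v ≤ T.chainIdx u) : T.path u v := by
  obtain ⟨a, ha⟩ := hne
  rcases hT.path_total_of_mem_cluster (hsub ha) ha with huv | hvu
  · exact huv
  by_cases hvu' : v = u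
  · exact hvu' ▸ path_refl T u
  have hc := (cluster_subset_of_path hvu).antisymm hsub
  exact absurd (hidx hc.symm)
    (chainIdx_lt_of_pathNT hT hu hc (pathNT_of_path_of_ne hvu hvu')).not_ge

theorem exists_label_of_chainIdx_eq_one (hT : T.IsATree)
    (hne : (T.cluster v).Nonempty) (hidx : T.chainIdx v = 1)
    (hmin : ∀ u ∈ T.nodes, ¬ T.cluster u ⊂ T.cluster v) : ∃ a, T.label v = some a := by
  obtain ⟨a, w, hvw, hw⟩ := hne
  have hwc : T.cluster w = T.cluster v := by
    by_contra hwc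
    exact hmin w (hT.label_mem hw) ((cluster_subset_of_path hvw).ssubset_of_ne hwc)
  obtain rfl : v = w := by
    by_contra hvw'
    have := chainIdx_lt_of_pathNT hT (hT.label_mem hw) hwc (pathNT_of_path_of_ne hvw hvw')
    have := one_le_chainIdx T w
    omega
  exact ⟨a, hw⟩

end ChainIdx

section Restrict

variable {T : PreTree α V} {X : Set α} {u v : V}

theorem restrict_label_eq_some_iff {a : α} :
    (T.restrict X).label v = some a ↔ a ∈ X ∧ T.label v = some a := by
  classical
  simp only [restrict]
  split_ifs with h
  · obtain ⟨b, hb, hbl⟩ := h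
    exact ⟨fun hl => ⟨Option.some.inj (hbl.symm.trans hl) ▸ hb, hl⟩, And.right⟩
  · exact ⟨fun hc => absurd hc (by simp), fun ⟨ha, hl⟩ => absurd ⟨a, ha, hl⟩ h⟩

theorem path_of_path_restrict (h : (T.restrict X).path u v) : T.path u v := by
  induction h with
  | refl => exact path_refl T u
  | tail _ harc ih => exact ih.tail harc.1

theorem path_restrict_of_path (h : T.path u v) (hv : (T.cluster v ∩ X).Nonempty) :
    (T.restrict X).path u v := by
  induction h using Relation.ReflTransGen.head_induction_on with
  | refl => exact path_refl _ v
  | head harc hpath ih =>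
    have meets : ∀ {x y}, T.path x y → (T.cluster y ∩ X).Nonempty → (T.cluster x ∩ X).Nonempty :=
      fun hxy ⟨a, ha, haX⟩ => ⟨a, cluster_subset_of_path hxy ha, haX⟩
    exact Relation.ReflTransGen.head
      ⟨harc, meets (path_of_arc harc) (meets hpath hv), meets hpath hv⟩ ih

theorem restrict_cluster (v : V) : (T.restrict X).cluster v = T.cluster v ∩ X := by
  ext a
  constructor
  · rintro ⟨w, hw, hl⟩
    obtain ⟨haX, hlw⟩ := restrict_label_eq_some_iff.mp hl
    exact ⟨⟨w, path_of_path_restrict hw, hlw⟩, haX⟩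
  · rintro ⟨⟨w, hw, hl⟩, haX⟩
    exact ⟨w, path_restrict_of_path hw ⟨a, ⟨w, path_refl T w, hl⟩, haX⟩,
      restrict_label_eq_some_iff.mpr ⟨haX, hl⟩⟩

theorem restrict_cluster_subset (v : V) : (T.restrict X).cluster v ⊆ X := by
  rw [restrict_cluster]; exact Set.inter_subset_right

theorem restrict_cluster_nonempty (hv : v ∈ (T.restrict X).nodes) :
    ((T.restrict X).cluster v).Nonempty := by
  rw [restrict_cluster]; exact hv.2

theorem IsATree.mem_restrict_of_path (hT : T.IsATree) (h : T.path u v)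
    (hv : v ∈ (T.restrict X).nodes) : u ∈ (T.restrict X).nodes :=
  have ⟨a, ha, haX⟩ := hv.2
  ⟨hT.mem_nodes_of_path h hv.1, a, cluster_subset_of_path h ha, haX⟩

theorem IsATree.restrict (hT : T.IsATree) (X : Set α) : (T.restrict X).IsATree where
  finite_nodes := hT.finite_nodes.subset fun _ hv => hv.1
  arc_mem_left h := ⟨hT.arc_mem_left h.1, h.2.1⟩
  arc_mem_right h := ⟨hT.arc_mem_right h.1, h.2.2⟩
  parent_unique hu hv := hT.parent_unique hu.1 hv.1
  acyclic h hp := hT.acyclic h.1 (path_of_path_restrict hp)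
  rooted := by
    rintro ⟨v, hv, a, ha, haX⟩
    obtain ⟨r, hr, hroot⟩ := hT.rooted ⟨v, hv⟩
    exact ⟨r, ⟨hr, a, cluster_subset_of_path (hroot v hv) ha, haX⟩,
      fun z hz => path_restrict_of_path (hroot z hz.1) hz.2⟩
  label_mem hl := by
    obtain ⟨haX, hlv⟩ := restrict_label_eq_some_iff.mp hl
    exact ⟨hT.label_mem hlv, _, ⟨_, path_refl T _, hlv⟩, haX⟩
  label_inj hu hv :=
    hT.label_inj (restrict_label_eq_some_iff.mp hu).2 (restrict_label_eq_some_iff.mp hv).2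
  leaf_labeled v hv hleaf := by
    obtain ⟨a, ⟨w, hw, hl⟩, haX⟩ := hv.2
    rcases hw.cases_head with rfl | ⟨x, hx, hxw⟩
    · exact ⟨a, restrict_label_eq_some_iff.mpr ⟨haX, hl⟩⟩
    · exact absurd ⟨hx, hv.2, a, ⟨w, hxw, hl⟩, haX⟩ (hleaf x)

theorem smallestContaining_restrict (hT : T.IsATree) {a : α} (haX : a ∈ X)
    (hl : T.label v = some a) :
    SmallestContaining (T.restrict X).clusterRep a ((T.restrict X).cluster v) := by
  have hlv : (T.restrict X).label v = some a := restrict_label_eq_some_iff.mpr ⟨haX, hl⟩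
  refine ⟨⟨v, (hT.restrict X).label_mem hlv, rfl⟩, ⟨v, path_refl _ v, hlv⟩, ?_⟩
  rintro _ ⟨u, -, rfl⟩ haY
  exact cluster_subset_of_path (((hT.restrict X).mem_cluster_iff_s17 hlv).mp haY)

theorem SmallestContaining.unique {R : Set (Set α)} {a : α} {X₁ X₂ : Set α}
    (h₁ : SmallestContaining R a X₁) (h₂ : SmallestContaining R a X₂) : X₁ = X₂ :=
  (h₁.2.2 X₂ h₂.1 h₂.2.1).antisymm (h₂.2.2 X₁ h₁.1 h₁.2.1)

end Restrict

def common (T₁ : PreTree α V) (T₂ : PreTree α W) : Set α := T₁.labelSet ∩ T₂.labelSet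

noncomputable def bar₁ (T₁ : PreTree α V) (T₂ : PreTree α W) : PreTree α V :=
  T₁.restrict (common T₁ T₂)

noncomputable def bar₂ (T₁ : PreTree α V) (T₂ : PreTree α W) : PreTree α W :=
  T₂.restrict (common T₁ T₂)

/-- Condition (iii). -/
def ClusterCompatible (T₁ : PreTree α V) (T₂ : PreTree α W) : Prop :=
  (∀ a ∈ common T₁ T₂, ∃ X : Set α,
      SmallestContaining (bar₁ T₁ T₂).clusterRep a X ∧
      SmallestContaining (bar₂ T₁ T₂).clusterRep a X) ∧
  (∀ X ∈ (bar₁ T₁ T₂).clusterRep, ∀ Y ∈ (bar₂ T₁ T₂).clusterRep,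
      (X ∩ Y).Nonempty → X ⊆ Y ∨ Y ⊆ X)

section Compatibility

variable {T₁ : PreTree α V} {T₂ : PreTree α W}

theorem AncCompat.locallyCompatible (h₁ : T₁.IsATree) (h₂ : T₂.IsATree)
    (h : AncCompat T₁ T₂) : LocallyCompatible T₁ T₂ := by
  obtain ⟨U, T, hT, ⟨f, -, -, hfl, hfp⟩, ⟨g, -, -, hgl, hgp⟩⟩ := h
  have hfg : ∀ {a x₁ x₂}, T₁.label x₁ = some a → T₂.label x₂ = some a → f x₁ = g x₂ :=
    fun hx₁ hx₂ => hT.label_inj (hfl _ _ hx₁) (hgl _ _ hx₂)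
  have hf : ∀ {u x a}, T₁.path u x → T₁.label x = some a → T.path (f u) (f x) :=
    fun hux hx => (hfp _ (h₁.mem_nodes_of_path hux (h₁.label_mem hx)) _ (h₁.label_mem hx)).mp hux
  have hg : ∀ {u x a}, T₂.path u x → T₂.label x = some a → T.path (g u) (g x) :=
    fun hux hx => (hgp _ (h₂.mem_nodes_of_path hux (h₂.label_mem hx)) _ (h₂.label_mem hx)).mp hux
  constructor
  · intro a b x₁ y₁ x₂ y₂ hx₁ hy₁ hx₂ hy₂
    rw [hfp _ (h₁.label_mem hx₁) _ (h₁.label_mem hy₁), hfg hx₁ hx₂, hfg hy₁ hy₂,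
      ← hgp _ (h₂.label_mem hx₂) _ (h₂.label_mem hy₂)]
  · intro a b c va₁ vb₁ vc₁ m₁ m₁' va₂ vb₂ vc₂ m₂ m₂' ha₁ hb₁ hc₁ ha₂ hb₂ hc₂
      hm₁ hm₁' hm₂ hm₂' hNT₁ hNT₂
    have hm₁'b := hf hm₁'.2.1 hb₁
    have hm₂'b := hfg hb₁ hb₂ ▸ hg hm₂'.1 hb₂
    rcases hT.path_total_of_path hm₁'b hm₂'b with h | h
    · have hc : T.path (f m₁') (f vc₁) := hfg hc₁ hc₂ ▸ h.trans (hg hm₂'.2.1 hc₂)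
      have hc : T₁.path m₁' vc₁ :=
        (hfp _ (h₁.mem_nodes_of_path hm₁'.1 (h₁.label_mem ha₁)) _ (h₁.label_mem hc₁)).mpr hc
      exact h₁.not_path_of_pathNT hNT₁ (hm₁.2.2 m₁' hm₁'.2.1 hc)
    · have ha : T.path (g m₂') (g va₂) := hfg ha₁ ha₂ ▸ h.trans (hf hm₁'.1 ha₁)
      have ha : T₂.path m₂' va₂ :=
        (hgp _ (h₂.mem_nodes_of_path hm₂'.1 (h₂.label_mem hb₂)) _ (h₂.label_mem ha₂)).mpr ha
      exact h₂.not_path_of_pathNT hNT₂ (hm₂.2.2 m₂' ha hm₂'.1)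

theorem IsATree.pathNT_of_mem_cluster {T : PreTree α V} (hT : T.IsATree)
    {u va vb vc m m' : V} (hua : T.path u va) (hub : T.path u vb) (huc : ¬ T.path u vc)
    (hm : T.IsMRCA vb vc m) (hm' : T.IsMRCA va vb m') : T.pathNT m m' := by
  have hum' : T.path u m' := hm'.2.2 u hua hub
  have hmu : T.path m u :=
    (hT.path_total_of_path hm.1 hub).resolve_right fun hum => huc (hum.trans hm.2.1)
  refine pathNT_of_path_of_ne (hmu.trans hum') ?_
  rintro rfl
  exact huc (hT.path_antisymm_s17 hum' hmu ▸ hm.2.1)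

theorem LocallyCompatible.cluster_eq (h₁ : T₁.IsATree) (h₂ : T₂.IsATree)
    (h : LocallyCompatible T₁ T₂) {a : α} {v : V} {w : W} (hv : T₁.label v = some a)
    (hw : T₂.label w = some a) : (bar₁ T₁ T₂).cluster v = (bar₂ T₁ T₂).cluster w := by
  simp only [bar₁, bar₂, restrict_cluster]
  ext b
  simp only [Set.mem_inter_iff, and_congr_left_iff]
  rintro ⟨⟨vb, hvb⟩, ⟨wb, hwb⟩⟩
  rw [h₁.mem_cluster_iff_s17 hvb, h₂.mem_cluster_iff_s17 hwb]
  exact h.1 a b v vb w wb hv hvb hw hwb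

theorem LocallyCompatible.subset_or_subset (h₁ : T₁.IsATree) (h₂ : T₂.IsATree)
    (h : LocallyCompatible T₁ T₂) {X Y : Set α} (hX : X ∈ (bar₁ T₁ T₂).clusterRep)
    (hY : Y ∈ (bar₂ T₁ T₂).clusterRep) (hne : (X ∩ Y).Nonempty) : X ⊆ Y ∨ Y ⊆ X := by
  obtain ⟨u, hu, rfl⟩ := hX
  obtain ⟨u', hu', rfl⟩ := hY
  obtain ⟨b, hbX, hbY⟩ := hne
  by_contra! hcon
  obtain ⟨a, haX, haY⟩ := Set.not_subset.mp hcon.1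
  obtain ⟨c, hcY, hcX⟩ := Set.not_subset.mp hcon.2
  simp only [bar₁, bar₂, restrict_cluster] at haX hbX hcX hcY hbY haY
  obtain ⟨⟨va₁, ha₁⟩, ⟨va₂, ha₂⟩⟩ := haX.2
  obtain ⟨⟨vb₁, hb₁⟩, ⟨vb₂, hb₂⟩⟩ := hbX.2
  obtain ⟨⟨vc₁, hc₁⟩, ⟨vc₂, hc₂⟩⟩ := hcY.2
  obtain ⟨r₁, -, hroot₁⟩ := h₁.rooted ⟨u, hu.1⟩
  obtain ⟨r₂, -, hroot₂⟩ := h₂.rooted ⟨u', hu'.1⟩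
  have mem₁ := fun {x a} (hx : T₁.label x = some a) => hroot₁ x (h₁.label_mem hx)
  have mem₂ := fun {x a} (hx : T₂.label x = some a) => hroot₂ x (h₂.label_mem hx)
  obtain ⟨m₁, hm₁⟩ := h₁.exists_isMRCA (h₁.label_mem hb₁) (mem₁ hb₁) (mem₁ hc₁)
  obtain ⟨m₁', hm₁'⟩ := h₁.exists_isMRCA (h₁.label_mem ha₁) (mem₁ ha₁) (mem₁ hb₁)
  obtain ⟨m₂, hm₂⟩ := h₂.exists_isMRCA (h₂.label_mem ha₂) (mem₂ ha₂) (mem₂ hb₂)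
  obtain ⟨m₂', hm₂'⟩ := h₂.exists_isMRCA (h₂.label_mem hb₂) (mem₂ hb₂) (mem₂ hc₂)
  refine h.2 a b c va₁ vb₁ vc₁ m₁ m₁' va₂ vb₂ vc₂ m₂ m₂' ha₁ hb₁ hc₁ ha₂ hb₂ hc₂
    hm₁ hm₁' hm₂ hm₂' ?_ ?_
  · exact h₁.pathNT_of_mem_cluster ((h₁.mem_cluster_iff_s17 ha₁).mp haX.1)
      ((h₁.mem_cluster_iff_s17 hb₁).mp hbX.1)
      (fun hp => hcX ⟨(h₁.mem_cluster_iff_s17 hc₁).mpr hp, hcY.2⟩) hm₁ hm₁'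
  · exact h₂.pathNT_of_mem_cluster ((h₂.mem_cluster_iff_s17 hc₂).mp hcY.1)
      ((h₂.mem_cluster_iff_s17 hb₂).mp hbY.1)
      (fun hp => haY ⟨(h₂.mem_cluster_iff_s17 ha₂).mpr hp, haX.2⟩) hm₂.symm hm₂'.symm

theorem LocallyCompatible.clusterCompatible (h₁ : T₁.IsATree) (h₂ : T₂.IsATree)
    (h : LocallyCompatible T₁ T₂) : ClusterCompatible T₁ T₂ := by
  refine ⟨fun a ha => ?_, fun X hX Y hY => h.subset_or_subset h₁ h₂ hX hY⟩
  have ⟨⟨v, hv⟩, ⟨w, hw⟩⟩ := ha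
  exact ⟨_, smallestContaining_restrict h₁ ha hv,
    h.cluster_eq h₁ h₂ hv hw ▸ smallestContaining_restrict h₂ ha hw⟩

end Compatibility

section Graft

def IsRoot (T : PreTree α V) (r : V) : Prop := r ∈ T.nodes ∧ ∀ v ∈ T.nodes, T.path r v

def graft (T₁ : PreTree α V) (T₂ : PreTree α W) : PreTree α (V ⊕ W) where
  nodes := Sum.inl '' T₁.nodes ∪ Sum.inr '' T₂.nodes
  arc x y := match x, y with
    | .inl u, .inl v => T₁.arc u v
    | .inr u, .inr v => T₂.arc u v
    | .inl u, .inr v => T₁.IsRoot u ∧ T₂.IsRoot v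
    | .inr _, .inl _ => False
  label := Sum.elim T₁.label T₂.label

variable {T₁ : PreTree α V} {T₂ : PreTree α W}

theorem path_graft_inl {u v : V} (h : T₁.path u v) : (graft T₁ T₂).path (.inl u) (.inl v) :=
  Relation.ReflTransGen.lift _ (fun _ _ h => h) _ _ h

theorem path_graft_inr {u v : W} (h : T₂.path u v) : (graft T₁ T₂).path (.inr u) (.inr v) :=
  Relation.ReflTransGen.lift _ (fun _ _ h => h) _ _ h

theorem exists_eq_inr_of_path_graft {w : W} {y : V ⊕ W} (h : (graft T₁ T₂).path (.inr w) y) :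
    ∃ w', y = .inr w' ∧ T₂.path w w' := by
  induction h with
  | refl => exact ⟨w, rfl, path_refl T₂ w⟩
  | @tail z y _ harc ih =>
    obtain ⟨w', rfl, hw'⟩ := ih
    cases y with
    | inl => exact harc.elim
    | inr v => exact ⟨v, rfl, hw'.tail harc⟩

theorem path_of_path_graft_inl {u v : V} (h : (graft T₁ T₂).path (.inl u) (.inl v)) :
    T₁.path u v := by
  suffices ∀ y, (graft T₁ T₂).path (.inl u) y → ∀ v, y = .inl v → T₁.path u v from
    this _ h v rfl
  intro y hy
  induction hy with
  | refl => rintro v ⟨⟩; exact path_refl T₁ u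
  | @tail z y _ harc ih =>
    rintro v rfl
    cases z with
    | inl z => exact (ih z rfl).tail harc
    | inr z => exact harc.elim

theorem path_of_path_graft_inr {u v : W} (h : (graft T₁ T₂).path (.inr u) (.inr v)) :
    T₂.path u v := by
  obtain ⟨w', hw', hp⟩ := exists_eq_inr_of_path_graft h
  exact Sum.inr_injective hw' ▸ hp

theorem IsATree.not_arc_of_isRoot {T : PreTree α V} (hT : T.IsATree) {r : V}
    (hr : T.IsRoot r) {u : V} : ¬ T.arc u r :=
  fun h => hT.acyclic h (hr.2 u (hT.arc_mem_left h))

theorem graft_rooted (h₁ : T₁.IsATree) (h₂ : T₂.IsATree) (hne : (graft T₁ T₂).nodes.Nonempty) :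
    ∃ r ∈ (graft T₁ T₂).nodes, ∀ z ∈ (graft T₁ T₂).nodes, (graft T₁ T₂).path r z := by
  by_cases hne₁ : T₁.nodes.Nonempty
  · obtain ⟨r, hr, hroot⟩ := h₁.rooted hne₁
    refine ⟨.inl r, .inl ⟨r, hr, rfl⟩, ?_⟩
    rintro _ (⟨v, hv, rfl⟩ | ⟨w, hw, rfl⟩)
    · exact path_graft_inl (hroot v hv)
    · obtain ⟨r₂, hr₂, hroot₂⟩ := h₂.rooted ⟨w, hw⟩
      exact Relation.ReflTransGen.head (show (graft T₁ T₂).arc (.inl r) (.inr r₂) from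
        ⟨⟨hr, hroot⟩, hr₂, hroot₂⟩) (path_graft_inr (hroot₂ w hw))
  · obtain ⟨_, ⟨v, hv, rfl⟩ | ⟨w, hw, rfl⟩⟩ := hne
    · exact (hne₁ ⟨v, hv⟩).elim
    obtain ⟨r₂, hr₂, hroot₂⟩ := h₂.rooted ⟨w, hw⟩
    refine ⟨.inr r₂, .inr ⟨r₂, hr₂, rfl⟩, ?_⟩
    rintro _ (⟨v, hv, rfl⟩ | ⟨w, hw, rfl⟩)
    · exact (hne₁ ⟨v, hv⟩).elim
    · exact path_graft_inr (hroot₂ w hw)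

theorem isATree_graft (h₁ : T₁.IsATree) (h₂ : T₂.IsATree) (hcom : common T₁ T₂ = ∅) :
    (graft T₁ T₂).IsATree where
  finite_nodes := (h₁.finite_nodes.image _).union (h₂.finite_nodes.image _)
  arc_mem_left {x y} h := by
    rcases x with u | u <;> rcases y with v | v
    exacts [.inl ⟨u, h₁.arc_mem_left h, rfl⟩, .inl ⟨u, h.1.1, rfl⟩, h.elim,
      .inr ⟨u, h₂.arc_mem_left h, rfl⟩]
  arc_mem_right {x y} h := by
    rcases x with u | u <;> rcases y with v | v
    exacts [.inl ⟨v, h₁.arc_mem_right h, rfl⟩, .inr ⟨v, h.2.1, rfl⟩, h.elim,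
      .inr ⟨v, h₂.arc_mem_right h, rfl⟩]
  parent_unique {x x' y} h h' := by
    rcases x with u | u <;> rcases x' with u' | u' <;> rcases y with v | v
    · exact congrArg _ (h₁.parent_unique h h')
    · exact congrArg _ (h₁.path_antisymm_s17 (h.1.2 u' h'.1.1) (h'.1.2 u h.1.1))
    · exact h'.elim
    · exact (h₂.not_arc_of_isRoot h.2 h').elim
    · exact h.elim
    · exact (h₂.not_arc_of_isRoot h'.2 h).elim
    · exact h.elim
    · exact congrArg _ (h₂.parent_unique h h')
  acyclic {x y} h hp := by
    rcases x with u | u <;> rcases y with v | v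
    · exact h₁.acyclic h (path_of_path_graft_inl hp)
    · obtain ⟨_, h, -⟩ := exists_eq_inr_of_path_graft hp
      exact Sum.inl_ne_inr h
    · exact h.elim
    · exact h₂.acyclic h (path_of_path_graft_inr hp)
  rooted := graft_rooted h₁ h₂
  label_mem {x a} h := by
    rcases x with v | w
    exacts [.inl ⟨v, h₁.label_mem h, rfl⟩, .inr ⟨w, h₂.label_mem h, rfl⟩]
  label_inj {x y a} hx hy := by
    have hcom : a ∉ common T₁ T₂ := hcom ▸ Set.notMem_empty a
    rcases x with u | u <;> rcases y with v | v
    · exact congrArg _ (h₁.label_inj hx hy)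
    · exact (hcom ⟨⟨u, hx⟩, ⟨v, hy⟩⟩).elim
    · exact (hcom ⟨⟨v, hy⟩, ⟨u, hx⟩⟩).elim
    · exact congrArg _ (h₂.label_inj hx hy)
  leaf_labeled x hx hleaf := by
    rcases hx with ⟨v, hv, rfl⟩ | ⟨w, hw, rfl⟩
    · exact h₁.leaf_labeled v hv fun u => hleaf (.inl u)
    · exact h₂.leaf_labeled w hw fun u => hleaf (.inr u)

theorem isWTE_inl_graft : IsWTE T₁ (graft T₁ T₂) Sum.inl :=
  ⟨fun v hv => .inl ⟨v, hv, rfl⟩, fun _ _ _ _ h => Sum.inl_injective h, fun _ _ h => h,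
    fun _ _ _ _ => ⟨path_graft_inl, path_of_path_graft_inl⟩⟩

theorem isWTE_inr_graft : IsWTE T₂ (graft T₁ T₂) Sum.inr :=
  ⟨fun v hv => .inr ⟨v, hv, rfl⟩, fun _ _ _ _ h => Sum.inr_injective h, fun _ _ h => h,
    fun _ _ _ _ => ⟨path_graft_inr, path_of_path_graft_inr⟩⟩

end Graft

section Glue

variable (T₁ : PreTree α V) (T₂ : PreTree α W)

def IsShared (w : W) : Prop := ∃ v a, T₁.label v = some a ∧ T₂.label w = some a

def InCore : V ⊕ W → Prop :=
  Sum.elim (· ∈ (bar₁ T₁ T₂).nodes) fun w => w ∈ (bar₂ T₁ T₂).nodes ∧ ¬ IsShared T₁ T₂ w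

noncomputable def coreCluster : V ⊕ W → Set α :=
  Sum.elim (bar₁ T₁ T₂).cluster (bar₂ T₁ T₂).cluster

def coreClusters : Set (Set α) := (bar₁ T₁ T₂).clusterRep ∪ (bar₂ T₁ T₂).clusterRep

open Classical in
noncomputable def sharedCount (Y : Set α) : ℕ :=
  if ∃ w ∈ (bar₂ T₁ T₂).nodes, IsShared T₁ T₂ w ∧ (bar₂ T₁ T₂).cluster w = Y then 1 else 0

/-- The chain of `T̄₂` with cluster `Y` is stacked on that of `T̄₁`, a shared bottom node of
`T̄₂` being the bottom node of `T̄₁`. -/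
noncomputable def chainLen (Y : Set α) : ℕ :=
  mcount (bar₁ T₁ T₂) Y + mcount (bar₂ T₁ T₂) Y - sharedCount T₁ T₂ Y

noncomputable def corePos : V ⊕ W → ℕ :=
  Sum.elim (bar₁ T₁ T₂).chainIdx fun w =>
    mcount (bar₁ T₁ T₂) ((bar₂ T₁ T₂).cluster w) + (bar₂ T₁ T₂).chainIdx w
      - sharedCount T₁ T₂ ((bar₂ T₁ T₂).cluster w)

def CoreArc (x y : V ⊕ W) : Prop :=
  InCore T₁ T₂ x ∧ InCore T₁ T₂ y ∧
    ((coreCluster T₁ T₂ y = coreCluster T₁ T₂ x ∧ corePos T₁ T₂ x = corePos T₁ T₂ y + 1) ∨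
     (corePos T₁ T₂ x = 1 ∧ coreCluster T₁ T₂ y ⊂ coreCluster T₁ T₂ x ∧
      corePos T₁ T₂ y = chainLen T₁ T₂ (coreCluster T₁ T₂ y) ∧
      ¬ ∃ Z ∈ coreClusters T₁ T₂, coreCluster T₁ T₂ y ⊂ Z ∧ Z ⊂ coreCluster T₁ T₂ x))

open Classical in
noncomputable def emb₂ (w : W) : V ⊕ W :=
  if h : IsShared T₁ T₂ w then .inl h.choose else .inr w

open Classical in
noncomputable def glue : PreTree α (V ⊕ W) where
  nodes := Sum.inl '' T₁.nodes ∪ Sum.inr '' {w | w ∈ T₂.nodes ∧ ¬ IsShared T₁ T₂ w}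
  arc x y := CoreArc T₁ T₂ x y ∨
    (∃ v v', x = .inl v ∧ y = .inl v' ∧ T₁.arc v v' ∧ v' ∉ (bar₁ T₁ T₂).nodes) ∨
    (∃ w w', x = emb₂ T₁ T₂ w ∧ y = .inr w' ∧ T₂.arc w w' ∧ w' ∉ (bar₂ T₁ T₂).nodes)
  label := Sum.elim T₁.label fun w => if IsShared T₁ T₂ w then none else T₂.label w

structure Gluable : Prop where
  tree₁ : T₁.IsATree
  tree₂ : T₂.IsATree
  cluster_eq : ∀ {a v w}, T₁.label v = some a → T₂.label w = some a →
    (bar₁ T₁ T₂).cluster v = (bar₂ T₁ T₂).cluster w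
  nested : ∀ Y ∈ coreClusters T₁ T₂, ∀ Z ∈ coreClusters T₁ T₂,
    (Y ∩ Z).Nonempty → Y ⊆ Z ∨ Z ⊆ Y

variable {T₁ T₂} {u v : V} {w w' : W} {x x' y z : V ⊕ W} {Y : Set α} {a : α}

theorem IsATree.bar₁ (h₁ : T₁.IsATree) : (bar₁ T₁ T₂).IsATree := h₁.restrict _

theorem IsATree.bar₂ (h₂ : T₂.IsATree) : (bar₂ T₁ T₂).IsATree := h₂.restrict _

theorem label_bar₁ (hv : T₁.label v = some a) (ha : a ∈ T₂.labelSet) :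
    (bar₁ T₁ T₂).label v = some a :=
  restrict_label_eq_some_iff.mpr ⟨⟨⟨v, hv⟩, ha⟩, hv⟩

theorem label_bar₂ (hw : T₂.label w = some a) (ha : a ∈ T₁.labelSet) :
    (bar₂ T₁ T₂).label w = some a :=
  restrict_label_eq_some_iff.mpr ⟨⟨ha, ⟨w, hw⟩⟩, hw⟩

theorem mem_bar₁_of_label (h₁ : T₁.IsATree) (hv : T₁.label v = some a)
    (ha : a ∈ T₂.labelSet) : v ∈ (bar₁ T₁ T₂).nodes :=
  h₁.bar₁.label_mem (label_bar₁ hv ha)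

theorem IsShared.mem_bar₂ (h₂ : T₂.IsATree) (hw : IsShared T₁ T₂ w) :
    w ∈ (bar₂ T₁ T₂).nodes :=
  have ⟨v, _, hv, hw⟩ := hw
  h₂.bar₂.label_mem (label_bar₂ hw ⟨v, hv⟩)

theorem IsShared.chainIdx_eq_one (h₂ : T₂.IsATree) (hw : IsShared T₁ T₂ w) :
    (bar₂ T₁ T₂).chainIdx w = 1 :=
  have ⟨v, _, hv, hw⟩ := hw
  chainIdx_eq_one_of_label h₂.bar₂ (label_bar₂ hw ⟨v, hv⟩)

theorem emb₂_of_not_isShared (hw : ¬ IsShared T₁ T₂ w) : emb₂ T₁ T₂ w = .inr w := by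
  classical
  simp [emb₂, hw]

theorem IsShared.exists_emb₂_eq (hw : IsShared T₁ T₂ w) :
    ∃ v a, emb₂ T₁ T₂ w = .inl v ∧ T₁.label v = some a ∧ T₂.label w = some a := by
  classical
  exact ⟨hw.choose, hw.choose_spec.choose, by simp [emb₂, hw], hw.choose_spec.choose_spec⟩

theorem emb₂_eq_inr_iff : emb₂ T₁ T₂ w = .inr w' ↔ ¬ IsShared T₁ T₂ w ∧ w = w' := by
  by_cases hw : IsShared T₁ T₂ w
  · obtain ⟨v, a, he, -⟩ := hw.exists_emb₂_eq
    simp [he, hw]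
  · simp [emb₂_of_not_isShared hw, hw]

theorem mem_bar₁_of_emb₂_eq_inl (h₁ : T₁.IsATree) (he : emb₂ T₁ T₂ w = .inl v) :
    v ∈ (bar₁ T₁ T₂).nodes := by
  by_cases hw : IsShared T₁ T₂ w
  · obtain ⟨v', a, he', hv', hw'⟩ := hw.exists_emb₂_eq
    obtain rfl : v' = v := Sum.inl_injective (he'.symm.trans he)
    exact mem_bar₁_of_label h₁ hv' ⟨w, hw'⟩
  · simp [emb₂_of_not_isShared hw] at he

theorem InCore.coreCluster_nonempty (hx : InCore T₁ T₂ x) : (coreCluster T₁ T₂ x).Nonempty := by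
  cases x with
  | inl v => exact restrict_cluster_nonempty hx
  | inr w => exact restrict_cluster_nonempty hx.1

theorem InCore.coreCluster_mem (hx : InCore T₁ T₂ x) :
    coreCluster T₁ T₂ x ∈ coreClusters T₁ T₂ := by
  cases x with
  | inl v => exact .inl ⟨v, hx, rfl⟩
  | inr w => exact .inr ⟨w, hx.1, rfl⟩

theorem subset_common_of_mem_coreClusters (hY : Y ∈ coreClusters T₁ T₂) :
    Y ⊆ common T₁ T₂ := by
  rcases hY with ⟨v, -, rfl⟩ | ⟨w, -, rfl⟩
  exacts [restrict_cluster_subset v, restrict_cluster_subset w]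

theorem finite_of_mem_coreClusters (h₁ : T₁.IsATree) (hY : Y ∈ coreClusters T₁ T₂) :
    Y.Finite :=
  h₁.labelSet_finite.subset ((subset_common_of_mem_coreClusters hY).trans Set.inter_subset_left)

theorem nonempty_of_mem_coreClusters (hY : Y ∈ coreClusters T₁ T₂) : Y.Nonempty := by
  rcases hY with ⟨v, hv, rfl⟩ | ⟨w, hw, rfl⟩
  exacts [restrict_cluster_nonempty hv, restrict_cluster_nonempty hw]

theorem coreClusters_finite (h₁ : T₁.IsATree) (h₂ : T₂.IsATree) :
    (coreClusters T₁ T₂).Finite :=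
  h₁.bar₁.clusterRep_finite_s17.union h₂.bar₂.clusterRep_finite_s17

theorem corePos_inl : corePos T₁ T₂ (.inl v) = (bar₁ T₁ T₂).chainIdx v := rfl

theorem corePos_inr : corePos T₁ T₂ (.inr w) = mcount (bar₁ T₁ T₂) ((bar₂ T₁ T₂).cluster w) +
    (bar₂ T₁ T₂).chainIdx w - sharedCount T₁ T₂ ((bar₂ T₁ T₂).cluster w) := rfl

theorem coreCluster_inl : coreCluster T₁ T₂ (.inl v) = (bar₁ T₁ T₂).cluster v := rfl

theorem sharedCount_le_one (T₁ : PreTree α V) (T₂ : PreTree α W) (Y : Set α) :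
    sharedCount T₁ T₂ Y ≤ 1 := by
  unfold sharedCount; split_ifs <;> omega

theorem sharedCount_eq_one
    (hY : ∃ w ∈ (bar₂ T₁ T₂).nodes, IsShared T₁ T₂ w ∧ (bar₂ T₁ T₂).cluster w = Y) :
    sharedCount T₁ T₂ Y = 1 := by
  classical
  exact if_pos hY

theorem emb₂_injective (h₂ : T₂.IsATree) : Function.Injective (emb₂ T₁ T₂) := by
  intro w w' he
  by_cases hw : IsShared T₁ T₂ w <;> by_cases hw' : IsShared T₁ T₂ w'
  · obtain ⟨v, a, hev, hv, hwa⟩ := hw.exists_emb₂_eq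
    obtain ⟨v', a', hev', hv', hwa'⟩ := hw'.exists_emb₂_eq
    obtain rfl : v = v' := Sum.inl_injective (hev.symm.trans (he.trans hev'))
    obtain rfl : a = a' := Option.some_injective _ (hv.symm.trans hv')
    exact h₂.label_inj hwa hwa'
  · obtain ⟨v, a, hev, -⟩ := hw.exists_emb₂_eq
    simp [hev, emb₂_of_not_isShared hw'] at he
  · obtain ⟨v, a, hev, -⟩ := hw'.exists_emb₂_eq
    simp [hev, emb₂_of_not_isShared hw] at he
  · simpa [emb₂_of_not_isShared hw, emb₂_of_not_isShared hw'] using he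

theorem exists_inl_of_path_glue (h₁ : T₁.IsATree) (hv : v ∉ (bar₁ T₁ T₂).nodes)
    (h : (glue T₁ T₂).path (.inl v) y) :
    ∃ v', y = .inl v' ∧ T₁.path v v' ∧ v' ∉ (bar₁ T₁ T₂).nodes := by
  induction h with
  | refl => exact ⟨v, rfl, path_refl T₁ v, hv⟩
  | tail _ harc ih =>
    obtain ⟨v', rfl, hvv', hv'⟩ := ih
    rcases harc with ⟨hc, -⟩ | ⟨_, a', ha, rfl, harc, ha'⟩ | ⟨b, _, hb, -, -, -⟩
    · exact absurd hc hv'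
    · obtain rfl := Sum.inl_injective ha
      exact ⟨a', rfl, hvv'.tail harc, ha'⟩
    · exact absurd (mem_bar₁_of_emb₂_eq_inl h₁ hb.symm) hv'

theorem exists_inr_of_path_glue (hw : w ∉ (bar₂ T₁ T₂).nodes)
    (h : (glue T₁ T₂).path (.inr w) y) :
    ∃ w', y = .inr w' ∧ T₂.path w w' ∧ w' ∉ (bar₂ T₁ T₂).nodes := by
  induction h with
  | refl => exact ⟨w, rfl, path_refl T₂ w, hw⟩
  | tail _ harc ih =>
    obtain ⟨w', rfl, hww', hw'⟩ := ih
    rcases harc with ⟨hc, -⟩ | ⟨_, _, ha, -, -, -⟩ | ⟨b, b', hb, rfl, harc, hb'⟩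
    · exact absurd hc.1 hw'
    · exact (Sum.inr_ne_inl ha).elim
    · obtain ⟨-, rfl⟩ := emb₂_eq_inr_iff.mp hb.symm
      exact ⟨b', rfl, hww'.tail harc, hb'⟩

theorem coreCluster_subset_of_path_glue (h₁ : T₁.IsATree) (h : (glue T₁ T₂).path x y)
    (hy : InCore T₁ T₂ y) :
    coreCluster T₁ T₂ y ⊆ coreCluster T₁ T₂ x ∧
      (coreCluster T₁ T₂ y = coreCluster T₁ T₂ x → corePos T₁ T₂ y ≤ corePos T₁ T₂ x) := by
  induction h using Relation.ReflTransGen.head_induction_on with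
  | refl => exact ⟨subset_rfl, fun _ => le_rfl⟩
  | head harc hzy ih =>
    obtain ⟨hsub, hpos⟩ := ih
    rcases harc with ⟨-, -, ⟨hc, hp⟩ | ⟨-, hss, -⟩⟩ | ⟨_, _, -, rfl, -, ha'⟩ |
      ⟨_, _, -, rfl, -, hb'⟩
    · refine ⟨hc ▸ hsub, fun h => ?_⟩
      have := hpos (h.trans hc.symm)
      omega
    · exact ⟨hsub.trans hss.subset, fun h => absurd (h ▸ hsub) hss.not_subset⟩
    · obtain ⟨_, rfl, -, hy'⟩ := exists_inl_of_path_glue h₁ ha' hzy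
      exact absurd hy hy'
    · obtain ⟨_, rfl, -, hy'⟩ := exists_inr_of_path_glue hb' hzy
      exact absurd hy.1 hy'

theorem glue_acyclic (h₁ : T₁.IsATree) (h₂ : T₂.IsATree) (harc : (glue T₁ T₂).arc x y)
    (hp : (glue T₁ T₂).path y x) : False := by
  rcases harc with ⟨hx, -, ⟨hc, hxy⟩ | ⟨-, hss, -⟩⟩ | ⟨_, _, rfl, rfl, harc, ha'⟩ |
    ⟨_, _, rfl, rfl, harc, hb'⟩
  · have := (coreCluster_subset_of_path_glue h₁ hp hx).2 hc.symm
    omega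
  · exact hss.not_subset (coreCluster_subset_of_path_glue h₁ hp hx).1
  · obtain ⟨_, he, hpath, -⟩ := exists_inl_of_path_glue h₁ ha' hp
    exact h₁.acyclic harc (Sum.inl_injective he ▸ hpath)
  · obtain ⟨_, he, hpath, -⟩ := exists_inr_of_path_glue hb' hp
    obtain ⟨-, rfl⟩ := emb₂_eq_inr_iff.mp he
    exact h₂.acyclic harc hpath

theorem InCore.mem_glue (hx : InCore T₁ T₂ x) : x ∈ (glue T₁ T₂).nodes := by
  cases x with
  | inl v => exact .inl ⟨v, hx.1, rfl⟩
  | inr w => exact .inr ⟨w, ⟨hx.1.1, hx.2⟩, rfl⟩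

theorem emb₂_mem_glue (h₁ : T₁.IsATree) (hw : w ∈ T₂.nodes) :
    emb₂ T₁ T₂ w ∈ (glue T₁ T₂).nodes := by
  by_cases hsh : IsShared T₁ T₂ w
  · obtain ⟨v, a, he, hv, -⟩ := hsh.exists_emb₂_eq
    exact he ▸ .inl ⟨v, h₁.label_mem hv, rfl⟩
  · exact emb₂_of_not_isShared hsh ▸ .inr ⟨w, ⟨hw, hsh⟩, rfl⟩

theorem mem_bar₂_of_inCore_emb₂ (h₂ : T₂.IsATree) (hw : InCore T₁ T₂ (emb₂ T₁ T₂ w)) :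
    w ∈ (bar₂ T₁ T₂).nodes := by
  by_cases hsh : IsShared T₁ T₂ w
  · exact hsh.mem_bar₂ h₂
  · rw [emb₂_of_not_isShared hsh] at hw
    exact hw.1

theorem glue_label_inl : (glue T₁ T₂).label (.inl v) = T₁.label v := rfl

theorem glue_label_inr :
    (glue T₁ T₂).label (.inr w) = some a ↔ ¬ IsShared T₁ T₂ w ∧ T₂.label w = some a := by
  classical
  by_cases hsh : IsShared T₁ T₂ w <;> simp [glue, hsh]

theorem glue_label_emb₂ : (glue T₁ T₂).label (emb₂ T₁ T₂ w) = T₂.label w := by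
  by_cases hsh : IsShared T₁ T₂ w
  · obtain ⟨v, a, he, hv, hw⟩ := hsh.exists_emb₂_eq
    rw [he, glue_label_inl, hv, hw]
  · classical
    simp [emb₂_of_not_isShared hsh, glue, hsh]

theorem path_of_path_glue_inl_of_mem (h₁ : T₁.IsATree) (hu : u ∈ (bar₁ T₁ T₂).nodes)
    (hv : v ∈ (bar₁ T₁ T₂).nodes) (h : (glue T₁ T₂).path (.inl u) (.inl v)) : T₁.path u v :=
  have ⟨hsub, hpos⟩ := coreCluster_subset_of_path_glue h₁ h hv
  path_of_path_restrict
    (path_of_cluster_subset h₁.bar₁ hu (restrict_cluster_nonempty hv) hsub hpos)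

theorem path_of_path_glue_inl (h₁ : T₁.IsATree) (h : (glue T₁ T₂).path (.inl u) (.inl v)) :
    T₁.path u v := by
  by_cases hu : u ∈ (bar₁ T₁ T₂).nodes
  swap
  · obtain ⟨_, he, hpath, -⟩ := exists_inl_of_path_glue h₁ hu h
    exact Sum.inl_injective he ▸ hpath
  by_cases hv : v ∈ (bar₁ T₁ T₂).nodes
  · exact path_of_path_glue_inl_of_mem h₁ hu hv h
  obtain ⟨p, q, hp, hup, hpq, hq, hqv⟩ := exists_arc_of_path (P := InCore T₁ T₂) h hu hv
  rcases hpq with ⟨-, hq', -⟩ | ⟨a, a', rfl, rfl, harc, ha'⟩ | ⟨_, _, -, rfl, -, hb'⟩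
  · exact absurd hq' hq
  · obtain ⟨_, he, hpath, -⟩ := exists_inl_of_path_glue h₁ ha' hqv
    exact (path_of_path_glue_inl_of_mem h₁ hu hp hup).trans
      (.head harc (Sum.inl_injective he ▸ hpath))
  · obtain ⟨_, he, -⟩ := exists_inr_of_path_glue hb' hqv
    exact (Sum.inl_ne_inr he).elim

namespace Gluable

theorem one_le_mcount_of_shared (H : Gluable T₁ T₂)
    (hY : ∃ w ∈ (bar₂ T₁ T₂).nodes, IsShared T₁ T₂ w ∧ (bar₂ T₁ T₂).cluster w = Y) :
    1 ≤ mcount (bar₁ T₁ T₂) Y ∧ 1 ≤ mcount (bar₂ T₁ T₂) Y := by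
  obtain ⟨w, hw, ⟨v, a, hv, hwa⟩, rfl⟩ := hY
  exact ⟨(one_le_mcount_iff H.tree₁.bar₁).mpr
      ⟨v, mem_bar₁_of_label H.tree₁ hv ⟨w, hwa⟩, H.cluster_eq hv hwa⟩,
    (one_le_mcount_iff H.tree₂.bar₂).mpr ⟨w, hw, rfl⟩⟩

theorem sharedCount_le_mcount (H : Gluable T₁ T₂) (Y : Set α) :
    sharedCount T₁ T₂ Y ≤ mcount (bar₁ T₁ T₂) Y ∧ sharedCount T₁ T₂ Y ≤ mcount (bar₂ T₁ T₂) Y := by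
  unfold sharedCount
  split_ifs with hY
  exacts [H.one_le_mcount_of_shared hY, ⟨Nat.zero_le _, Nat.zero_le _⟩]

theorem one_le_chainLen (H : Gluable T₁ T₂) (hY : Y ∈ coreClusters T₁ T₂) :
    1 ≤ chainLen T₁ T₂ Y := by
  have hs := H.sharedCount_le_mcount Y
  have hs₁ := sharedCount_le_one T₁ T₂ Y
  have hm : 1 ≤ mcount (bar₁ T₁ T₂) Y ∨ 1 ≤ mcount (bar₂ T₁ T₂) Y := by
    rcases hY with ⟨v, hv, rfl⟩ | ⟨w, hw, rfl⟩
    exacts [.inl ((one_le_mcount_iff H.tree₁.bar₁).mpr ⟨v, hv, rfl⟩),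
      .inr ((one_le_mcount_iff H.tree₂.bar₂).mpr ⟨w, hw, rfl⟩)]
  simp only [chainLen]
  omega

theorem one_le_corePos (H : Gluable T₁ T₂) (hx : InCore T₁ T₂ x) : 1 ≤ corePos T₁ T₂ x := by
  cases x with
  | inl v => exact one_le_chainIdx _ v
  | inr w =>
    have := (bar₂ T₁ T₂).one_le_chainIdx w
    have := (H.sharedCount_le_mcount ((bar₂ T₁ T₂).cluster w)).1
    simp only [corePos, Sum.elim_inr]
    omega

theorem corePos_le_chainLen (H : Gluable T₁ T₂) (hx : InCore T₁ T₂ x) :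
    corePos T₁ T₂ x ≤ chainLen T₁ T₂ (coreCluster T₁ T₂ x) := by
  cases x with
  | inl v =>
    have := chainIdx_le_mcount H.tree₁.bar₁ (v := v) hx
    have := (H.sharedCount_le_mcount ((bar₁ T₁ T₂).cluster v)).2
    simp only [corePos, chainLen, coreCluster, Sum.elim_inl]
    omega
  | inr w =>
    have := chainIdx_le_mcount H.tree₂.bar₂ (v := w) hx.1
    have := (H.sharedCount_le_mcount ((bar₂ T₁ T₂).cluster w)).1
    simp only [corePos, chainLen, coreCluster, Sum.elim_inr]
    omega

theorem mcount_lt_corePos_inr (H : Gluable T₁ T₂) (hw : InCore T₁ T₂ (.inr w)) :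
    mcount (bar₁ T₁ T₂) ((bar₂ T₁ T₂).cluster w) < corePos T₁ T₂ (.inr w) := by
  have hc := (bar₂ T₁ T₂).one_le_chainIdx w
  simp only [corePos, Sum.elim_inr]
  unfold sharedCount
  split_ifs with hY
  · obtain ⟨w₀, hw₀, hs, hc₀⟩ := hY
    have hne : w₀ ≠ w := fun h => hw.2 (h ▸ hs)
    have : (bar₂ T₁ T₂).chainIdx w ≠ 1 := fun h => hne <|
      eq_of_chainIdx_eq H.tree₂.bar₂ hw₀ hw.1 hc₀ (restrict_cluster_nonempty hw.1)
        ((hs.chainIdx_eq_one H.tree₂).trans h.symm)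
    omega
  · omega

theorem eq_of_corePos_eq (H : Gluable T₁ T₂) (hx : InCore T₁ T₂ x) (hy : InCore T₁ T₂ y)
    (hc : coreCluster T₁ T₂ x = coreCluster T₁ T₂ y) (hp : corePos T₁ T₂ x = corePos T₁ T₂ y) :
    x = y := by
  have inl_ne_inr : ∀ {v w}, InCore T₁ T₂ (.inl v) → InCore T₁ T₂ (.inr w) →
      coreCluster T₁ T₂ (.inl v) = coreCluster T₁ T₂ (.inr w) →
      corePos T₁ T₂ (.inl v) ≠ corePos T₁ T₂ (.inr w) := fun {v w} hv hw hc => by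
    have := chainIdx_le_mcount H.tree₁.bar₁ (v := v) hv
    have := H.mcount_lt_corePos_inr hw
    simp only [coreCluster, Sum.elim_inl, Sum.elim_inr] at hc
    simp only [corePos, Sum.elim_inl] at *
    rw [hc] at *
    omega
  rcases x with v | w <;> rcases y with v' | w'
  · exact congrArg _ (eq_of_chainIdx_eq H.tree₁.bar₁ hx hy hc
      (restrict_cluster_nonempty hy) hp)
  · exact (inl_ne_inr hx hy hc hp).elim
  · exact (inl_ne_inr hy hx hc.symm hp.symm).elim
  · simp only [coreCluster, corePos, Sum.elim_inr] at hc hp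
    have := (H.sharedCount_le_mcount ((bar₂ T₁ T₂).cluster w')).1
    rw [hc] at hp
    exact congrArg _ (eq_of_chainIdx_eq H.tree₂.bar₂ hx.1 hy.1 hc
      (restrict_cluster_nonempty hy.1) (by omega))

theorem exists_corePos_eq (H : Gluable T₁ T₂) (hY : Y ∈ coreClusters T₁ T₂) {p : ℕ}
    (hp₁ : 1 ≤ p) (hp₂ : p ≤ chainLen T₁ T₂ Y) :
    ∃ x, InCore T₁ T₂ x ∧ coreCluster T₁ T₂ x = Y ∧ corePos T₁ T₂ x = p := by
  have hYne := nonempty_of_mem_coreClusters hY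
  by_cases hpm : p ≤ mcount (bar₁ T₁ T₂) Y
  · obtain ⟨v, hv, hvc, hvi⟩ := exists_chainIdx_eq H.tree₁.bar₁ hYne hp₁ hpm
    exact ⟨.inl v, hv, hvc, hvi⟩
  have hs := H.sharedCount_le_mcount Y
  have hs₁ := sharedCount_le_one T₁ T₂ Y
  simp only [chainLen] at hp₂
  obtain ⟨w, hw, hwc, hwi⟩ := exists_chainIdx_eq (H.tree₂.bar₂ (T₁ := T₁)) hYne
    (j := p - mcount (bar₁ T₁ T₂) Y + sharedCount T₁ T₂ Y) (by omega) (by omega)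
  have hnsh : ¬ IsShared T₁ T₂ w := fun hsh => by
    have := sharedCount_eq_one ⟨w, hw, hsh, hwc⟩
    have := hsh.chainIdx_eq_one H.tree₂
    omega
  refine ⟨.inr w, ⟨hw, hnsh⟩, hwc, ?_⟩
  simp only [corePos, Sum.elim_inr, hwc, hwi]
  omega

theorem inCore_emb₂ (H : Gluable T₁ T₂) (hw : w ∈ (bar₂ T₁ T₂).nodes) :
    InCore T₁ T₂ (emb₂ T₁ T₂ w) ∧ coreCluster T₁ T₂ (emb₂ T₁ T₂ w) = (bar₂ T₁ T₂).cluster w := by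
  by_cases hsh : IsShared T₁ T₂ w
  · obtain ⟨v, a, he, hv, hwa⟩ := hsh.exists_emb₂_eq
    rw [he]
    exact ⟨mem_bar₁_of_label H.tree₁ hv ⟨w, hwa⟩, H.cluster_eq hv hwa⟩
  · rw [emb₂_of_not_isShared hsh]
    exact ⟨⟨hw, hsh⟩, rfl⟩

theorem corePos_emb₂_lt (H : Gluable T₁ T₂) (hw' : w' ∈ (bar₂ T₁ T₂).nodes)
    (hc : (bar₂ T₁ T₂).cluster w = (bar₂ T₁ T₂).cluster w')
    (hidx : (bar₂ T₁ T₂).chainIdx w < (bar₂ T₁ T₂).chainIdx w') :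
    corePos T₁ T₂ (emb₂ T₁ T₂ w) < corePos T₁ T₂ (emb₂ T₁ T₂ w') := by
  have hnsh' : ¬ IsShared T₁ T₂ w' := fun hsh => by
    have := hsh.chainIdx_eq_one H.tree₂
    have := (bar₂ T₁ T₂).one_le_chainIdx w
    omega
  have hlt := H.mcount_lt_corePos_inr ⟨hw', hnsh'⟩
  rw [emb₂_of_not_isShared hnsh']
  by_cases hsh : IsShared T₁ T₂ w
  · obtain ⟨v, a, he, hv, hwa⟩ := hsh.exists_emb₂_eq
    have := chainIdx_le_mcount H.tree₁.bar₁ (mem_bar₁_of_label H.tree₁ hv ⟨w, hwa⟩)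
    rw [he, corePos_inl]
    rw [H.cluster_eq hv hwa, hc] at this
    omega
  · have := (H.sharedCount_le_mcount ((bar₂ T₁ T₂).cluster w')).1
    rw [emb₂_of_not_isShared hsh]
    simp only [corePos, Sum.elim_inr, hc]
    omega

theorem exists_path_down_chain (H : Gluable T₁ T₂) (hx : InCore T₁ T₂ x) {q : ℕ} (hq : 1 ≤ q)
    (hqx : q ≤ corePos T₁ T₂ x) : ∃ y, InCore T₁ T₂ y ∧ coreCluster T₁ T₂ y = coreCluster T₁ T₂ x ∧
      corePos T₁ T₂ y = q ∧ (glue T₁ T₂).path x y := by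
  obtain ⟨n, hn⟩ : ∃ n, corePos T₁ T₂ x = q + n := ⟨_, (Nat.add_sub_cancel' hqx).symm⟩
  induction n generalizing x with
  | zero => exact ⟨x, hx, rfl, hn, path_refl _ x⟩
  | succ n ih =>
    obtain ⟨z, hz, hzc, hzp⟩ := H.exists_corePos_eq hx.coreCluster_mem
      (p := corePos T₁ T₂ x - 1) (by omega) (by have := H.corePos_le_chainLen hx; omega)
    have harc : (glue T₁ T₂).arc x z := .inl ⟨hx, hz, .inl ⟨hzc, by omega⟩⟩
    obtain ⟨y, hy, hyc, hyp, hzy⟩ := ih hz (by omega) (by omega)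
    exact ⟨y, hy, hyc.trans hzc, hyp, .head harc hzy⟩

/-- The arc goes to the top of the chain of a maximal cluster between `Y` and the cluster
of `x`. -/
theorem exists_arc_of_ssubset (H : Gluable T₁ T₂) (hx : InCore T₁ T₂ x)
    (hpos : corePos T₁ T₂ x = 1) (hY : Y ∈ coreClusters T₁ T₂) (hYx : Y ⊂ coreCluster T₁ T₂ x) :
    ∃ t, InCore T₁ T₂ t ∧ (glue T₁ T₂).arc x t ∧ Y ⊆ coreCluster T₁ T₂ t ∧
      coreCluster T₁ T₂ t ⊂ coreCluster T₁ T₂ x ∧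
      corePos T₁ T₂ t = chainLen T₁ T₂ (coreCluster T₁ T₂ t) := by
  have hfin : {Z | Z ∈ coreClusters T₁ T₂ ∧ Y ⊆ Z ∧ Z ⊂ coreCluster T₁ T₂ x}.Finite :=
    (coreClusters_finite H.tree₁ H.tree₂).subset fun _ hZ => hZ.1
  obtain ⟨Z, ⟨hZ, hYZ, hZx⟩, hmax⟩ := hfin.exists_maximal ⟨Y, hY, subset_rfl, hYx⟩
  obtain ⟨t, ht, rfl, htp⟩ := H.exists_corePos_eq hZ (H.one_le_chainLen hZ) le_rfl
  refine ⟨t, ht, .inl ⟨hx, ht, .inr ⟨hpos, hZx, htp, ?_⟩⟩, hYZ, hZx, htp⟩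
  rintro ⟨Z', hZ', htZ', hZ'x⟩
  exact htZ'.not_subset (hmax ⟨hZ', hYZ.trans htZ'.subset, hZ'x⟩ htZ'.subset)

theorem path_of_coreCluster_subset (H : Gluable T₁ T₂) (hx : InCore T₁ T₂ x)
    (hy : InCore T₁ T₂ y) (hsub : coreCluster T₁ T₂ y ⊆ coreCluster T₁ T₂ x)
    (hpos : coreCluster T₁ T₂ y = coreCluster T₁ T₂ x → corePos T₁ T₂ y ≤ corePos T₁ T₂ x) :
    (glue T₁ T₂).path x y := by
  induction hn : (coreCluster T₁ T₂ x).ncard using Nat.strong_induction_on generalizing x with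
  | _ n ih =>
  by_cases hc : coreCluster T₁ T₂ y = coreCluster T₁ T₂ x
  · obtain ⟨z, hz, hzc, hzp, hxz⟩ := H.exists_path_down_chain hx (H.one_le_corePos hy) (hpos hc)
    rwa [H.eq_of_corePos_eq hz hy (hzc.trans hc.symm) hzp] at hxz
  · obtain ⟨x₁, hx₁, hx₁c, hx₁p, hxx₁⟩ := H.exists_path_down_chain hx le_rfl (H.one_le_corePos hx)
    obtain ⟨t, ht, harc, hyt, htx, htp⟩ := H.exists_arc_of_ssubset hx₁ hx₁p
      hy.coreCluster_mem (hx₁c ▸ hsub.ssubset_of_ne hc)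
    have hlt : (coreCluster T₁ T₂ t).ncard < n :=
      hn ▸ Set.ncard_lt_ncard (hx₁c ▸ htx) (finite_of_mem_coreClusters H.tree₁ hx.coreCluster_mem)
    refine hxx₁.trans (.head harc (ih _ hlt ht hyt (fun h => ?_) rfl))
    exact htp ▸ h ▸ H.corePos_le_chainLen hy

theorem eq_of_coreArc (H : Gluable T₁ T₂) (h : CoreArc T₁ T₂ x y) (h' : CoreArc T₁ T₂ x' y) :
    x = x' := by
  obtain ⟨hx, hy, hxy⟩ := h
  obtain ⟨hx', -, hx'y⟩ := h'
  have hxlen := H.corePos_le_chainLen hx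
  have hx'len := H.corePos_le_chainLen hx'
  rcases hxy with ⟨hc, hp⟩ | ⟨hp, hss, hpt, hmax⟩ <;>
    rcases hx'y with ⟨hc', hp'⟩ | ⟨hp', hss', hpt', hmax'⟩
  · exact H.eq_of_corePos_eq hx hx' (hc.symm.trans hc') (by omega)
  · rw [← hc] at hxlen; omega
  · rw [← hc'] at hx'len; omega
  · obtain ⟨b, hb⟩ := hy.coreCluster_nonempty
    have hc : coreCluster T₁ T₂ x = coreCluster T₁ T₂ x' := by
      rcases H.nested _ hx.coreCluster_mem _ hx'.coreCluster_mem ⟨b, hss.subset hb, hss'.subset hb⟩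
        with hsub | hsub
      · exact by_contra fun hne => hmax' ⟨_, hx.coreCluster_mem, hss, hsub.ssubset_of_ne hne⟩
      · exact by_contra fun hne =>
          hmax ⟨_, hx'.coreCluster_mem, hss', hsub.ssubset_of_ne (Ne.symm hne)⟩
    exact H.eq_of_corePos_eq hx hx' hc (hp.trans hp'.symm)

theorem glue_parent_unique (H : Gluable T₁ T₂) (h : (glue T₁ T₂).arc x y)
    (h' : (glue T₁ T₂).arc x' y) : x = x' := by
  rcases h with hc | ⟨_, a', rfl, rfl, harc, ha'⟩ | ⟨_, b', rfl, rfl, harc, hb'⟩ <;>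
    rcases h' with hc' | ⟨_, c', rfl, hcy, harc', hc''⟩ | ⟨_, d', rfl, hdy, harc', hd''⟩
  · exact H.eq_of_coreArc hc hc'
  · subst hcy
    exact (hc'' hc.2.1).elim
  · subst hdy
    exact (hd'' hc.2.1.1).elim
  · exact (ha' hc'.2.1).elim
  · obtain rfl := Sum.inl_injective hcy
    exact congrArg _ (H.tree₁.parent_unique harc harc')
  · exact (Sum.inl_ne_inr hdy).elim
  · exact (hb' hc'.2.1.1).elim
  · exact (Sum.inr_ne_inl hcy).elim
  · obtain rfl := Sum.inr_injective hdy
    exact congrArg _ (H.tree₂.parent_unique harc harc')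

theorem path_glue_inl_of_arc (H : Gluable T₁ T₂) (h : T₁.arc u v) :
    (glue T₁ T₂).path (.inl u) (.inl v) := by
  by_cases hv : v ∈ (bar₁ T₁ T₂).nodes
  · have harc : (bar₁ T₁ T₂).arc u v :=
      ⟨h, (H.tree₁.mem_restrict_of_path (path_of_arc h) hv).2, hv.2⟩
    refine H.path_of_coreCluster_subset (H.tree₁.mem_restrict_of_path (path_of_arc h) hv) hv
      (cluster_subset_of_path (path_of_arc harc)) fun hc => ?_
    exact (chainIdx_lt_of_pathNT H.tree₁.bar₁ hv hc (.single harc)).le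
  · exact path_of_arc (.inr (.inl ⟨u, v, rfl, rfl, h, hv⟩))

theorem path_glue_emb₂_of_arc (H : Gluable T₁ T₂) (h : T₂.arc w w') :
    (glue T₁ T₂).path (emb₂ T₁ T₂ w) (emb₂ T₁ T₂ w') := by
  by_cases hw' : w' ∈ (bar₂ T₁ T₂).nodes
  · have hw := H.tree₂.mem_restrict_of_path (path_of_arc h) hw'
    have harc : (bar₂ T₁ T₂).arc w w' := ⟨h, hw.2, hw'.2⟩
    obtain ⟨hcw, hcw_eq⟩ := H.inCore_emb₂ hw
    obtain ⟨hcw', hcw'_eq⟩ := H.inCore_emb₂ hw'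
    refine H.path_of_coreCluster_subset hcw hcw'
      (hcw_eq ▸ hcw'_eq ▸ cluster_subset_of_path (path_of_arc harc)) fun hc => ?_
    rw [hcw_eq, hcw'_eq] at hc
    exact (H.corePos_emb₂_lt hw hc
      (chainIdx_lt_of_pathNT H.tree₂.bar₂ hw' hc (.single harc))).le
  · have hsh : ¬ IsShared T₁ T₂ w' := fun hsh => hw' (hsh.mem_bar₂ H.tree₂)
    exact emb₂_of_not_isShared hsh ▸ path_of_arc (.inr (.inr ⟨w, w', rfl, rfl, h, hw'⟩))

theorem path_glue_inl (H : Gluable T₁ T₂) (h : T₁.path u v) :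
    (glue T₁ T₂).path (.inl u) (.inl v) := by
  induction h with
  | refl => exact path_refl _ _
  | tail _ harc ih => exact ih.trans (H.path_glue_inl_of_arc harc)

theorem path_glue_emb₂ (H : Gluable T₁ T₂) (h : T₂.path w w') :
    (glue T₁ T₂).path (emb₂ T₁ T₂ w) (emb₂ T₁ T₂ w') := by
  induction h with
  | refl => exact path_refl _ _
  | tail _ harc ih => exact ih.trans (H.path_glue_emb₂_of_arc harc)

/-- The top node of the chain of the full common label set is a root. -/
theorem glue_rooted (H : Gluable T₁ T₂) (hcom : (common T₁ T₂).Nonempty) :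
    ∃ r ∈ (glue T₁ T₂).nodes, ∀ z ∈ (glue T₁ T₂).nodes, (glue T₁ T₂).path r z := by
  obtain ⟨a, ⟨va, hva⟩, ⟨wa, hwa⟩⟩ := hcom
  obtain ⟨r₁, -, hroot₁⟩ := H.tree₁.rooted ⟨va, H.tree₁.label_mem hva⟩
  obtain ⟨r₂, -, hroot₂⟩ := H.tree₂.rooted ⟨wa, H.tree₂.label_mem hwa⟩
  have hr₁ : r₁ ∈ (bar₁ T₁ T₂).nodes := H.tree₁.mem_restrict_of_path
    (hroot₁ va (H.tree₁.label_mem hva)) (mem_bar₁_of_label H.tree₁ hva ⟨wa, hwa⟩)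
  have hr₂ : r₂ ∈ (bar₂ T₁ T₂).nodes := H.tree₂.mem_restrict_of_path
    (hroot₂ wa (H.tree₂.label_mem hwa)) (IsShared.mem_bar₂ H.tree₂ ⟨va, a, hva, hwa⟩)
  have hr₁c : (bar₁ T₁ T₂).cluster r₁ = common T₁ T₂ := by
    refine (restrict_cluster_subset r₁).antisymm fun b hb => ?_
    obtain ⟨vb, hvb⟩ := hb.1
    exact (H.tree₁.bar₁.mem_cluster_iff_s17 (label_bar₁ hvb hb.2)).mpr
      (path_restrict_of_path (hroot₁ vb (H.tree₁.label_mem hvb)) ⟨b, ⟨vb, path_refl _ _, hvb⟩, hb⟩)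
  have hcore : InCore T₁ T₂ (.inl r₁) := hr₁
  obtain ⟨ρ, hρ, hρc, hρp⟩ :=
    H.exists_corePos_eq hcore.coreCluster_mem (H.one_le_chainLen hcore.coreCluster_mem) le_rfl
  have reach : ∀ z, InCore T₁ T₂ z → (glue T₁ T₂).path ρ z := fun z hz => by
    refine H.path_of_coreCluster_subset hρ hz ?_ fun h => ?_
    · rw [hρc, coreCluster_inl, hr₁c]
      exact subset_common_of_mem_coreClusters hz.coreCluster_mem
    · rw [hρp, ← hρc, ← h]
      exact H.corePos_le_chainLen hz
  refine ⟨ρ, hρ.mem_glue, ?_⟩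
  rintro _ (⟨v, hv, rfl⟩ | ⟨w, ⟨hw, hsh⟩, rfl⟩)
  · exact (reach _ hcore).trans (H.path_glue_inl (hroot₁ v hv))
  · have := (reach _ (H.inCore_emb₂ hr₂).1).trans (H.path_glue_emb₂ (hroot₂ w hw))
    rwa [emb₂_of_not_isShared hsh] at this

/-- A childless core node is the bottom of its chain and has no smaller cluster below it,
hence labeled; in `T̄₂` such a node would be shared. -/
theorem glue_leaf_labeled_of_inCore (H : Gluable T₁ T₂) (hz : InCore T₁ T₂ z)
    (hleaf : ∀ y, ¬ (glue T₁ T₂).arc z y) : ∃ a, (glue T₁ T₂).label z = some a := by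
  have hpos : corePos T₁ T₂ z = 1 := by
    by_contra hne
    have := H.one_le_corePos hz
    obtain ⟨y, hy, hyc, hyp⟩ := H.exists_corePos_eq hz.coreCluster_mem
      (p := corePos T₁ T₂ z - 1) (by omega) (by have := H.corePos_le_chainLen hz; omega)
    exact hleaf y (.inl ⟨hz, hy, .inl ⟨hyc, by omega⟩⟩)
  have hmin : ∀ Y ∈ coreClusters T₁ T₂, ¬ Y ⊂ coreCluster T₁ T₂ z := fun Y hY hYz =>
    have ⟨t, _, harc, _⟩ := H.exists_arc_of_ssubset hz hpos hY hYz
    hleaf t harc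
  cases z with
  | inl v =>
    obtain ⟨a, ha⟩ := exists_label_of_chainIdx_eq_one H.tree₁.bar₁
      (restrict_cluster_nonempty hz) hpos fun u hu => hmin _ (.inl ⟨u, hu, rfl⟩)
    exact ⟨a, (restrict_label_eq_some_iff.mp ha).2⟩
  | inr w =>
    have hidx : (bar₂ T₁ T₂).chainIdx w = 1 := by
      have := (H.sharedCount_le_mcount ((bar₂ T₁ T₂).cluster w)).1
      have := (bar₂ T₁ T₂).one_le_chainIdx w
      rw [corePos_inr] at hpos
      omega
    obtain ⟨a, ha⟩ := exists_label_of_chainIdx_eq_one H.tree₂.bar₂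
      (restrict_cluster_nonempty hz.1) hidx fun u hu => hmin _ (.inr ⟨u, hu, rfl⟩)
    obtain ⟨⟨⟨v, hv⟩, -⟩, hwa⟩ := restrict_label_eq_some_iff.mp ha
    exact (hz.2 ⟨v, a, hv, hwa⟩).elim

theorem glue_leaf_labeled (H : Gluable T₁ T₂) (hz : z ∈ (glue T₁ T₂).nodes)
    (hleaf : ∀ y, ¬ (glue T₁ T₂).arc z y) : ∃ a, (glue T₁ T₂).label z = some a := by
  by_cases hcore : InCore T₁ T₂ z
  · exact H.glue_leaf_labeled_of_inCore hcore hleaf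
  rcases hz with ⟨v, hv, rfl⟩ | ⟨w, ⟨hw, hsh⟩, rfl⟩
  · exact H.tree₁.leaf_labeled v hv fun u harc => hleaf _ (.inr (.inl ⟨v, u, rfl, rfl, harc,
      fun hu => hcore (H.tree₁.mem_restrict_of_path (path_of_arc harc) hu)⟩))
  · have hw' : w ∉ (bar₂ T₁ T₂).nodes := fun h => hcore ⟨h, hsh⟩
    obtain ⟨a, ha⟩ := H.tree₂.leaf_labeled w hw fun u harc => hleaf _ (.inr (.inr
      ⟨w, u, emb₂_of_not_isShared hsh ▸ rfl, rfl, harc,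
        fun hu => hw' (H.tree₂.mem_restrict_of_path (path_of_arc harc) hu)⟩))
    exact ⟨a, glue_label_inr.mpr ⟨hsh, ha⟩⟩

theorem isATree_glue (H : Gluable T₁ T₂) (hcom : (common T₁ T₂).Nonempty) :
    (glue T₁ T₂).IsATree where
  finite_nodes :=
    (H.tree₁.finite_nodes.image _).union ((H.tree₂.finite_nodes.subset fun _ h => h.1).image _)
  arc_mem_left h := by
    rcases h with hc | ⟨u, _, rfl, -, harc, -⟩ | ⟨w, _, rfl, -, harc, -⟩
    · exact hc.1.mem_glue
    · exact .inl ⟨u, H.tree₁.arc_mem_left harc, rfl⟩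
    · exact emb₂_mem_glue H.tree₁ (H.tree₂.arc_mem_left harc)
  arc_mem_right h := by
    rcases h with hc | ⟨_, v, -, rfl, harc, -⟩ | ⟨_, w, -, rfl, harc, hw⟩
    · exact hc.2.1.mem_glue
    · exact .inl ⟨v, H.tree₁.arc_mem_right harc, rfl⟩
    · exact .inr ⟨w, ⟨H.tree₂.arc_mem_right harc, fun hsh => hw (hsh.mem_bar₂ H.tree₂)⟩, rfl⟩
  parent_unique := H.glue_parent_unique
  acyclic := glue_acyclic H.tree₁ H.tree₂
  rooted _ := H.glue_rooted hcom
  label_mem {x a} h := by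
    cases x with
    | inl v => exact .inl ⟨v, H.tree₁.label_mem h, rfl⟩
    | inr w =>
      obtain ⟨hsh, hw⟩ := glue_label_inr.mp h
      exact .inr ⟨w, ⟨H.tree₂.label_mem hw, hsh⟩, rfl⟩
  label_inj {x y a} hx hy := by
    rcases x with u | u <;> rcases y with v | v
    · exact congrArg _ (H.tree₁.label_inj hx hy)
    · exact ((glue_label_inr.mp hy).1 ⟨u, a, hx, (glue_label_inr.mp hy).2⟩).elim
    · exact ((glue_label_inr.mp hx).1 ⟨v, a, hy, (glue_label_inr.mp hx).2⟩).elim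
    · exact congrArg _ (H.tree₂.label_inj (glue_label_inr.mp hx).2 (glue_label_inr.mp hy).2)
  leaf_labeled _ := H.glue_leaf_labeled

theorem path_of_path_glue_emb₂_of_mem (H : Gluable T₁ T₂) (hw : w ∈ (bar₂ T₁ T₂).nodes)
    (hw' : w' ∈ (bar₂ T₁ T₂).nodes) (h : (glue T₁ T₂).path (emb₂ T₁ T₂ w) (emb₂ T₁ T₂ w')) :
    T₂.path w w' := by
  obtain ⟨-, hcw⟩ := H.inCore_emb₂ hw
  obtain ⟨hw'core, hcw'⟩ := H.inCore_emb₂ hw'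
  obtain ⟨hsub, hpos⟩ := coreCluster_subset_of_path_glue H.tree₁ h hw'core
  rw [hcw, hcw'] at hsub hpos
  refine path_of_path_restrict (path_of_cluster_subset H.tree₂.bar₂ hw
    (restrict_cluster_nonempty hw') hsub fun hc => ?_)
  exact not_lt.mp fun hlt => (H.corePos_emb₂_lt hw' hc.symm hlt).not_ge (hpos hc)

theorem path_of_path_glue_emb₂ (H : Gluable T₁ T₂)
    (h : (glue T₁ T₂).path (emb₂ T₁ T₂ w) (emb₂ T₁ T₂ w')) : T₂.path w w' := by
  have not_shared : ∀ {w}, w ∉ (bar₂ T₁ T₂).nodes → ¬ IsShared T₁ T₂ w :=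
    fun hw hsh => hw (hsh.mem_bar₂ H.tree₂)
  by_cases hw : w ∈ (bar₂ T₁ T₂).nodes
  swap
  · rw [emb₂_of_not_isShared (not_shared hw)] at h
    obtain ⟨_, he, hpath, -⟩ := exists_inr_of_path_glue hw h
    obtain ⟨-, rfl⟩ := emb₂_eq_inr_iff.mp he
    exact hpath
  by_cases hw' : w' ∈ (bar₂ T₁ T₂).nodes
  · exact H.path_of_path_glue_emb₂_of_mem hw hw' h
  have he' := emb₂_of_not_isShared (not_shared hw')
  obtain ⟨p, q, hp, hup, hpq, hq, hqv⟩ := exists_arc_of_path (P := InCore T₁ T₂) h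
    (H.inCore_emb₂ hw).1 (he' ▸ fun hc => hw' hc.1)
  rcases hpq with ⟨-, hq', -⟩ | ⟨_, _, -, rfl, -, ha'⟩ | ⟨b, b', rfl, rfl, harc, hb'⟩
  · exact absurd hq' hq
  · obtain ⟨_, he, -⟩ := exists_inl_of_path_glue H.tree₁ ha' hqv
    exact (Sum.inr_ne_inl (he'.symm.trans he)).elim
  · obtain ⟨_, he, hpath, -⟩ := exists_inr_of_path_glue hb' hqv
    obtain ⟨-, rfl⟩ := emb₂_eq_inr_iff.mp he
    exact (H.path_of_path_glue_emb₂_of_mem hw (mem_bar₂_of_inCore_emb₂ H.tree₂ hp) hup).trans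
      (.head harc hpath)

theorem isWTE_inl (H : Gluable T₁ T₂) : IsWTE T₁ (glue T₁ T₂) Sum.inl :=
  ⟨fun v hv => .inl ⟨v, hv, rfl⟩, fun _ _ _ _ h => Sum.inl_injective h, fun _ _ h => h,
    fun _ _ _ _ => ⟨H.path_glue_inl, path_of_path_glue_inl H.tree₁⟩⟩

theorem isWTE_emb₂ (H : Gluable T₁ T₂) : IsWTE T₂ (glue T₁ T₂) (emb₂ T₁ T₂) :=
  ⟨fun _ hw => emb₂_mem_glue H.tree₁ hw, fun _ _ _ _ h => emb₂_injective H.tree₂ h,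
    fun _ _ h => glue_label_emb₂.trans h,
    fun _ _ _ _ => ⟨H.path_glue_emb₂, H.path_of_path_glue_emb₂⟩⟩

end Gluable

theorem ClusterCompatible.gluable (h₁ : T₁.IsATree) (h₂ : T₂.IsATree)
    (h : ClusterCompatible T₁ T₂) : Gluable T₁ T₂ where
  tree₁ := h₁
  tree₂ := h₂
  cluster_eq {a v w} hv hw := by
    have ha : a ∈ common T₁ T₂ := ⟨⟨v, hv⟩, ⟨w, hw⟩⟩
    obtain ⟨X, hX₁, hX₂⟩ := h.1 a ha
    exact ((smallestContaining_restrict h₁ ha hv).unique hX₁).trans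
      ((smallestContaining_restrict h₂ ha hw).unique hX₂).symm
  nested := by
    rintro Y (hY | hY) Z (hZ | hZ) hne
    · obtain ⟨u, -, rfl⟩ := hY
      obtain ⟨u', -, rfl⟩ := hZ
      exact h₁.bar₁.cluster_subset_or_subset hne
    · exact h.2 Y hY Z hZ hne
    · exact (h.2 Z hZ Y hY (Set.inter_comm Y Z ▸ hne)).symm
    · obtain ⟨w, -, rfl⟩ := hY
      obtain ⟨w', -, rfl⟩ := hZ
      exact h₂.bar₂.cluster_subset_or_subset hne

theorem ClusterCompatible.ancCompat (h₁ : T₁.IsATree) (h₂ : T₂.IsATree)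
    (h : ClusterCompatible T₁ T₂) : AncCompat T₁ T₂ := by
  by_cases hcom : (common T₁ T₂).Nonempty
  · have H := h.gluable h₁ h₂
    exact ⟨V ⊕ W, glue T₁ T₂, H.isATree_glue hcom, ⟨_, H.isWTE_inl⟩, ⟨_, H.isWTE_emb₂⟩⟩
  · exact ⟨V ⊕ W, graft T₁ T₂, isATree_graft h₁ h₂ (Set.not_nonempty_iff_eq_empty.mp hcom),
      ⟨_, isWTE_inl_graft⟩, ⟨_, isWTE_inr_graft⟩⟩

end Glue

end PreTree

/-- For arbitrary 𝒜-trees, ancestral compatibility, local compatibility, and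
the joint condition on the cluster representations of the restrictions to the common label
set are all equivalent. -/
theorem stmt17 {α V W : Type} (T₁ : PreTree α V) (T₂ : PreTree α W)
    (h₁ : T₁.IsATree) (h₂ : T₂.IsATree) :
    (PreTree.AncCompat T₁ T₂ ↔ PreTree.LocallyCompatible T₁ T₂) ∧
    (PreTree.LocallyCompatible T₁ T₂ ↔
      ((∀ a ∈ T₁.labelSet ∩ T₂.labelSet, ∃ X : Set α,
          PreTree.SmallestContaining
            (T₁.restrict (T₁.labelSet ∩ T₂.labelSet)).clusterRep a X ∧
          PreTree.SmallestContaining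
            (T₂.restrict (T₁.labelSet ∩ T₂.labelSet)).clusterRep a X) ∧
       (∀ X ∈ (T₁.restrict (T₁.labelSet ∩ T₂.labelSet)).clusterRep,
          ∀ Y ∈ (T₂.restrict (T₁.labelSet ∩ T₂.labelSet)).clusterRep,
          (X ∩ Y).Nonempty → X ⊆ Y ∨ Y ⊆ X))) := by
  have i_ii := PreTree.AncCompat.locallyCompatible h₁ h₂
  have ii_iii := PreTree.LocallyCompatible.clusterCompatible h₁ h₂
  have iii_i := PreTree.ClusterCompatible.ancCompat h₁ h₂
  exact ⟨⟨i_ii, iii_i ∘ ii_iii⟩, ⟨ii_iii, i_ii ∘ iii_i⟩⟩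
end
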